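/- arXiv:2301.13832 — 11 statements merged into one kernel-verified Lean document; each statement's English description precedes it below -/
import Mathlib

section
/- Volume bound (Lemma 3.1): every c-ideal family H of hash functions satisfies |H| · M_c ≥ C(u,n), where C(u,n) is the binomial coefficient 'u choose n'. In particular, the minimum possible cardinality of a c-ideal family is at least C(u,n)/M_c. -/
open Finset

/-- The maximum cell load of hash function `h` on key set `S`. -/
def cost {u m : ℕ} (h : Fin u → Fin m) (S : Finset (Fin u)) : ℕ :=
  Finset.univ.sup fun k : Fin m => (S.filter fun x => h x = k).card

/-- The collection of all `n`-element subsets of the universe `Fin u`. -/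
def Sn (u n : ℕ) : Finset (Finset (Fin u)) :=
  Finset.univ.powersetCard n

/-- The maximal number of `n`-element sets any single hash function maps `c`-ideally
(i.e., with maximum cell load at most `d`). -/
def Mc (u m n d : ℕ) : ℕ :=
  Finset.univ.sup fun h : Fin u → Fin m =>
    ((Sn u n).filter fun S => cost h S ≤ d).card

/-- A family `H` of hash functions is `c`-ideal if every `n`-element set of keys is
hashed with maximum cell load at most `d` by some member of `H`. -/
def IsIdealFamily (u m n d : ℕ) (H : Finset (Fin u → Fin m)) : Prop :=
  ∀ S ∈ Sn u n, ∃ h ∈ H, cost h S ≤ d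

/-- **Volume bound** (Lemma 3.1): every `c`-ideal family `H` of hash functions satisfies
`|H| · M_c ≥ C(u,n)`; in particular the minimum cardinality of a `c`-ideal family is at
least `C(u,n)/M_c`. -/
theorem volume_bound (u m n d : ℕ) (hu : 0 < u) (hm : 0 < m) (hn : 0 < n)
    (hmn : m ≤ n) (hnu : n ^ 2 ≤ u) (hdvd : m ∣ n) (hαd : n / m ≤ d)
    (H : Finset (Fin u → Fin m)) (hH : IsIdealFamily u m n d H) :
    Nat.choose u n ≤ H.card * Mc u m n d := by
  have hsub : Sn u n ⊆ H.biUnion fun h => (Sn u n).filter fun S => cost h S ≤ d := by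
    intro S hS
    obtain ⟨h, hhH, hc⟩ := hH S hS
    exact mem_biUnion.2 ⟨h, hhH, mem_filter.2 ⟨hS, hc⟩⟩
  calc Nat.choose u n = (Sn u n).card := by
        simp [Sn, Nat.card_eq_fintype_card (α := Fin u)]
    _ ≤ (H.biUnion fun h => (Sn u n).filter fun S => cost h S ≤ d).card :=
        card_le_card hsub
    _ ≤ ∑ h ∈ H, ((Sn u n).filter fun S => cost h S ≤ d).card := card_biUnion_le
    _ ≤ ∑ _h ∈ H, Mc u m n d := by
        refine Finset.sum_le_sum fun h _ => ?_
        exact Finset.le_sup (f := fun h : Fin u → Fin m => ((Sn u n).filter fun S => cost h S ≤ d).card) (mem_univ h)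
    _ = H.card * Mc u m n d := by rw [Finset.sum_const, smul_eq_mul]
end

section
/- Balance maximizes M_c (Theorem 3.3): assume m ≥ 2, 1 ≤ α ≤ d, d < n and d < ⌊u/m⌋. A hash function h : Fin u → Fin m satisfies |{S ∈ S_n : cost(h,S) ≤ d}| = M_c if and only if h is balanced, i.e., a hash function hashes the maximum possible number of n-element subsets c-ideally exactly when it is balanced. -/
/-!
Relabelling keys or cells does not change how many `n`-sets are hashed with load at most `d`,
and two balanced hash functions differ by such a relabelling (their fiber sizes are the same
multiset), so all balanced functions have the same count.

If `g` is not balanced, take a largest cell (of size `> d`) and a cell at least two smaller, and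
move one key `x` of the first to the second. Every set that is gained or lost contains `x`. Group
these sets by their part `P` outside the two cells and by the number `s < d` of keys they take
from the cell that is not full. With `a > b` the sizes of the two cells without `x`, a group of
lost sets has `C(a, s) C(b, d)` members and the matching group of gained sets has
`C(a, d) C(b, s)`, which is at least as large, and larger for a suitable `P`. So no unbalanced
function attains `M_c`, while some function does.
-/

open Finset

/-- A hash function is balanced if every fiber has cardinality `⌊u/m⌋` or `⌈u/m⌉`. -/
def IsBalanced {u m : ℕ} (h : Fin u → Fin m) : Prop :=
  ∀ k : Fin m, (Finset.univ.filter fun x => h x = k).card = u / m ∨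
    (Finset.univ.filter fun x => h x = k).card = (u + m - 1) / m

open Function

lemma mem_Sn {u n : ℕ} {S : Finset (Fin u)} : S ∈ Sn u n ↔ #S = n :=
  mem_powersetCard_univ

section Hashing

variable {u m n d : ℕ}

def fiber (h : Fin u → Fin m) (k : Fin m) : Finset (Fin u) := {y | h y = k}

def cellmates (h : Fin u → Fin m) (x : Fin u) : Finset (Fin u) := (fiber h (h x)).erase x

def idealSets (h : Fin u → Fin m) (n d : ℕ) : Finset (Finset (Fin u)) :=
  {S ∈ Sn u n | cost h S ≤ d}

lemma disjoint_fiber {h : Fin u → Fin m} {i j : Fin m} (hij : i ≠ j) :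
    Disjoint (fiber h i) (fiber h j) :=
  disjoint_filter.2 fun _ _ hi hj => hij (hi.symm.trans hj)

lemma sum_card_fiber (h : Fin u → Fin m) : ∑ k, #(fiber h k) = u := by
  simpa [fiber] using (card_eq_sum_card_fiberwise (f := h) (s := univ) (t := univ) (by simp)).symm

lemma cost_le_iff {h : Fin u → Fin m} {S : Finset (Fin u)} :
    cost h S ≤ d ↔ ∀ k, #{y ∈ S | h y = k} ≤ d := by
  simp [cost]

lemma card_idealSets_le_Mc (h : Fin u → Fin m) : #(idealSets h n d) ≤ Mc u m n d :=
  le_sup (f := fun h => #(idealSets h n d)) (mem_univ h)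

lemma cost_equiv_comp (h : Fin u → Fin m) (π : Fin m ≃ Fin m) (S : Finset (Fin u)) :
    cost (π ∘ h) S = cost h S := by
  have hfib (k : Fin m) : {y ∈ S | (π ∘ h) y = k} = {y ∈ S | h y = π.symm k} := by
    simp only [comp_apply, Equiv.eq_symm_apply]
  simp only [cost, hfib]
  exact (sup_map univ π.symm.toEmbedding fun k => #{y ∈ S | h y = k}).symm.trans
    (by rw [map_univ_equiv])

lemma cost_map_equiv (h : Fin u → Fin m) (σ : Fin u ≃ Fin u) (S : Finset (Fin u)) :
    cost h (S.map σ.toEmbedding) = cost (h ∘ σ) S := by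
  simp only [cost, filter_map, card_map]
  rfl

lemma card_idealSets_comp_equiv (h : Fin u → Fin m) (σ : Fin u ≃ Fin u) :
    #(idealSets (h ∘ σ) n d) = #(idealSets h n d) := by
  apply card_nbij' (fun S => S.map σ.toEmbedding) (fun S => S.map σ.symm.toEmbedding)
  · intro S hS
    simp_all [idealSets, mem_Sn, cost_map_equiv]
  · intro S hS
    have := cost_map_equiv (h ∘ σ) σ.symm S
    simp_all [idealSets, mem_Sn, comp_def]
  · intro S _
    simp [map_map]
  · intro S _
    simp [map_map]

lemma card_idealSets_eq_of_comp_eq {h₁ h₂ : Fin u → Fin m} {σ : Fin u ≃ Fin u}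
    {π : Fin m ≃ Fin m} (hσπ : h₁ ∘ σ = π ∘ h₂) :
    #(idealSets h₁ n d) = #(idealSets h₂ n d) := by
  rw [← card_idealSets_comp_equiv h₁ σ, hσπ]
  simp only [idealSets, cost_equiv_comp]

lemma exists_mem_Sn_cost_le_div (hm : 0 < m) (hnu : n ≤ u) (hdvd : m ∣ n) :
    ∃ h : Fin u → Fin m, ∃ S ∈ Sn u n, cost h S ≤ n / m := by
  refine ⟨fun y => ⟨y % m, Nat.mod_lt _ hm⟩, univ.map (Fin.castLEEmb hnu), by simp [mem_Sn], ?_⟩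
  rw [cost_le_iff]
  intro k
  refine (card_le_card_of_injOn (t := range (n / m)) (fun y : Fin u => (y : ℕ) / m) ?_ ?_).trans
    (card_range _).le
  · intro y hy
    simp only [coe_filter, mem_map, mem_univ, true_and, Set.mem_ofPred_eq] at hy
    obtain ⟨⟨z, rfl⟩, -⟩ := hy
    simpa using Nat.div_lt_div_of_lt_of_dvd hdvd z.isLt
  · intro y hy z hz hyz
    simp only [coe_filter, mem_map, Set.mem_ofPred_eq, Fin.ext_iff] at hy hz
    have hyz' : (y : ℕ) / m = z / m := hyz
    apply Fin.ext
    rw [← Nat.div_add_mod (y : ℕ) m, ← Nat.div_add_mod (z : ℕ) m, hyz', hy.2, hz.2]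

end Hashing

section Levels

variable {ι : Type*} [Fintype ι] {f f₁ f₂ : ι → ℕ} {q : ℕ}

lemma card_mul_add_card_filter_eq_sum (hf : ∀ k, f k = q ∨ f k = q + 1) :
    Fintype.card ι * q + #{k | f k = q + 1} = ∑ k, f k := by
  have (k : ι) : f k = q + if f k = q + 1 then 1 else 0 := by
    rcases hf k with h | h <;> simp [h]
  rw [sum_congr rfl fun k _ => this k, sum_add_distrib, sum_boole]
  simp

lemma card_filter_eq_add_card_filter_eq_succ (hf : ∀ k, f k = q ∨ f k = q + 1) :
    #{k | f k = q} + #{k | f k = q + 1} = Fintype.card ι := by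
  rw [← card_univ, ← card_filter_add_card_filter_not (s := univ) (fun k => f k = q)]
  congr 2
  ext k
  have := hf k
  simp only [mem_filter, mem_univ, true_and]
  omega

lemma card_filter_eq_eq_of_sum_eq (hf₁ : ∀ k, f₁ k = q ∨ f₁ k = q + 1)
    (hf₂ : ∀ k, f₂ k = q ∨ f₂ k = q + 1) (hsum : ∑ k, f₁ k = ∑ k, f₂ k) (v : ℕ) :
    #{k | f₁ k = v} = #{k | f₂ k = v} := by
  have htop : #{k | f₁ k = q + 1} = #{k | f₂ k = q + 1} := by
    have := card_mul_add_card_filter_eq_sum hf₁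
    have := card_mul_add_card_filter_eq_sum hf₂
    omega
  by_cases hv : v = q ∨ v = q + 1
  · rcases hv with rfl | rfl
    · have := card_filter_eq_add_card_filter_eq_succ hf₁
      have := card_filter_eq_add_card_filter_eq_succ hf₂
      omega
    · exact htop
  · rw [filter_false_of_mem fun k _ => by have := hf₁ k; omega,
      filter_false_of_mem fun k _ => by have := hf₂ k; omega]

end Levels

section Balance

variable {u m : ℕ} {h : Fin u → Fin m}

lemma IsBalanced.card_fiber_eq_or_eq_succ (hh : IsBalanced h) (k : Fin m) :
    #(fiber h k) = u / m ∨ #(fiber h k) = u / m + 1 := by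
  have hm := k.pos
  have hceil : (u + m - 1) / m ≤ u / m + 1 := by
    have hlt : u + m - 1 < (u / m + 2) * m := by
      have := Nat.lt_mul_div_succ u hm
      have e : (u / m + 2) * m = m * (u / m + 1) + m := by ring
      omega
    exact Nat.lt_succ_iff.mp ((Nat.div_lt_iff_lt_mul hm).2 hlt)
  have hfloor : u / m ≤ (u + m - 1) / m := Nat.div_le_div_right (by omega)
  rcases hh k with hk | hk <;> simp only [fiber] <;> omega

lemma IsBalanced.exists_comp_eq {h₁ h₂ : Fin u → Fin m} (hb₁ : IsBalanced h₁)
    (hb₂ : IsBalanced h₂) : ∃ (σ : Fin u ≃ Fin u) (π : Fin m ≃ Fin m), h₁ ∘ σ = π ∘ h₂ := by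
  have hlevel (v : ℕ) : #{k | #(fiber h₂ k) = v} = #{k | #(fiber h₁ k) = v} :=
    card_filter_eq_eq_of_sum_eq hb₂.card_fiber_eq_or_eq_succ hb₁.card_fiber_eq_or_eq_succ
      (by rw [sum_card_fiber, sum_card_fiber]) v
  let π : Fin m ≃ Fin m :=
    Equiv.ofFiberEquiv (f := fun k => #(fiber h₂ k)) (g := fun k => #(fiber h₁ k)) fun v =>
      Fintype.equivOfCardEq (by simp only [Fintype.card_subtype, hlevel])
  have hπ (k : Fin m) : #(fiber h₁ (π k)) = #(fiber h₂ k) :=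
    Equiv.ofFiberEquiv_map (g := fun k => #(fiber h₁ k)) _ k
  have hcard (c : Fin m) : #{y | π (h₂ y) = c} = #{y | h₁ y = c} := by
    simp only [← Equiv.eq_symm_apply]
    simpa [fiber] using (hπ (π.symm c)).symm
  refine ⟨Equiv.ofFiberEquiv (f := π ∘ h₂) (g := h₁) fun c => Fintype.equivOfCardEq ?_, π,
    funext fun y => ?_⟩
  · simp only [Fintype.card_subtype, comp_apply, hcard]
  · exact Equiv.ofFiberEquiv_map (f := π ∘ h₂) _ y

lemma isBalanced_of_card_fiber_le_succ (hspread : ∀ i j, #(fiber h i) ≤ #(fiber h j) + 1) :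
    IsBalanced h := by
  intro k
  obtain ⟨k₀, -, hk₀⟩ := exists_min_image univ (fun k => #(fiber h k)) ⟨k, mem_univ k⟩
  set v := #(fiber h k₀)
  have hlow : m * v ≤ u := by
    calc m * v = ∑ _k : Fin m, v := by simp
      _ ≤ ∑ k, #(fiber h k) := sum_le_sum fun k _ => hk₀ k (mem_univ k)
      _ = u := sum_card_fiber h
  have hhigh : u < m * (v + 1) := by
    calc u = ∑ k, #(fiber h k) := (sum_card_fiber h).symm
      _ < ∑ _k : Fin m, (v + 1) :=
        sum_lt_sum (fun k _ => hspread k k₀) ⟨k₀, mem_univ _, by omega⟩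
      _ = m * (v + 1) := by simp
  have hfloor : u / m = v := Nat.div_eq_of_lt_le (by linarith) (by linarith)
  have hk : #(fiber h k) = v ∨ #(fiber h k) = v + 1 := by
    have := hk₀ k (mem_univ k)
    have := hspread k k₀
    omega
  rcases hk with hk | hk
  · exact Or.inl (hk.trans hfloor.symm)
  · have hgt : m * v < u := by
      calc m * v = ∑ _k : Fin m, v := by simp
        _ < ∑ k, #(fiber h k) :=
          sum_lt_sum (fun k _ => hk₀ k (mem_univ k)) ⟨k, mem_univ _, by omega⟩
        _ = u := sum_card_fiber h
    have e₁ : (v + 1) * m = m * v + m := by ring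
    have e₂ : (v + 1 + 1) * m = m * (v + 1) + m := by ring
    refine Or.inr (hk.trans (Nat.div_eq_of_lt_le ?_ ?_).symm) <;> omega

lemma exists_card_fiber_gap_of_not_isBalanced (hh : ¬IsBalanced h) :
    ∃ i j, #(fiber h j) + 2 ≤ #(fiber h i) ∧ u / m ≤ #(fiber h i) := by
  obtain ⟨a, b, hab⟩ : ∃ a b, #(fiber h b) + 1 < #(fiber h a) := by
    by_contra! H
    exact hh (isBalanced_of_card_fiber_le_succ H)
  obtain ⟨i, -, hi⟩ := exists_max_image univ (fun k => #(fiber h k)) ⟨a, mem_univ a⟩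
  refine ⟨i, b, by have := hi a (mem_univ a); omega, Nat.div_le_of_le_mul ?_⟩
  calc u = ∑ k, #(fiber h k) := (sum_card_fiber h).symm
    _ ≤ ∑ _k : Fin m, #(fiber h i) := sum_le_sum hi
    _ = m * #(fiber h i) := by simp

end Balance

section SetsWithTrace

variable {α : Type*} [DecidableEq α] {A B : Finset α}

def setsWithTrace [Fintype α] (A B P : Finset α) (p q : ℕ) : Finset (Finset α) :=
  {S | S \ (A ∪ B) = P ∧ #(S ∩ A) = p ∧ #(S ∩ B) = q}

lemma card_setsWithTrace [Fintype α] (hAB : Disjoint A B) {P : Finset α}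
    (hP : Disjoint P (A ∪ B)) (p q : ℕ) :
    #(setsWithTrace A B P p q) = (#A).choose p * (#B).choose q := by
  rw [← card_powersetCard p A, ← card_powersetCard q B, ← card_product]
  have hsplit : ∀ T₁ ⊆ A, ∀ T₂ ⊆ B,
      (P ∪ T₁ ∪ T₂) \ (A ∪ B) = P ∧ (P ∪ T₁ ∪ T₂) ∩ A = T₁ ∧ (P ∪ T₁ ∪ T₂) ∩ B = T₂ := by
    intro T₁ h₁ T₂ h₂
    rw [disjoint_left] at hAB hP
    refine ⟨?_, ?_, ?_⟩ <;> ext y <;> simp only [mem_sdiff, mem_union, mem_inter] <;> grind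
  apply card_nbij' (fun S => (S ∩ A, S ∩ B)) (fun T => P ∪ T.1 ∪ T.2)
  · intro S hS
    simp only [setsWithTrace, coe_filter, mem_univ, true_and, Set.mem_ofPred_eq] at hS
    simp [hS.2.1, hS.2.2, inter_subset_right]
  · rintro ⟨T₁, T₂⟩ hT
    simp only [coe_product, Set.mem_prod, mem_coe, mem_powersetCard] at hT
    obtain ⟨h₀, h₁, h₂⟩ := hsplit T₁ hT.1.1 T₂ hT.2.1
    simp only [setsWithTrace, coe_filter, mem_univ, true_and, Set.mem_ofPred_eq]
    exact ⟨h₀, by rw [h₁, hT.1.2], by rw [h₂, hT.2.2]⟩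
  · intro S hS
    simp only [setsWithTrace, coe_filter, mem_univ, true_and, Set.mem_ofPred_eq] at hS
    rw [← hS.1]
    ext y
    simp only [mem_union, mem_sdiff, mem_inter]
    tauto
  · rintro ⟨T₁, T₂⟩ hT
    simp only [coe_product, Set.mem_prod, mem_coe, mem_powersetCard] at hT
    obtain ⟨-, h₁, h₂⟩ := hsplit T₁ hT.1.1 T₂ hT.2.1
    exact Prod.ext h₁ h₂

lemma card_eq_card_sdiff_add_card_inter_add_card_inter (hAB : Disjoint A B) (S : Finset α) :
    #S = #(S \ (A ∪ B)) + #(S ∩ A) + #(S ∩ B) := by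
  rw [← card_sdiff_add_card_inter S (A ∪ B), inter_union_distrib_left,
    card_union_of_disjoint (disjoint_of_subset_left inter_subset_right
      (disjoint_of_subset_right inter_subset_right hAB)), add_assoc]

end SetsWithTrace

lemma choose_mul_choose_le {a b s d : ℕ} (hsd : s ≤ d) (hba : b ≤ a) :
    a.choose s * b.choose d ≤ a.choose d * b.choose s := by
  induction d, hsd using Nat.le_induction with
  | base => exact le_rfl
  | succ d hsd ih =>
    refine Nat.le_of_mul_le_mul_right ?_ d.succ_pos
    calc a.choose s * b.choose (d + 1) * (d + 1)
        = a.choose s * b.choose d * (b - d) := by rw [mul_assoc, Nat.choose_succ_right_eq]; ring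
      _ ≤ a.choose d * b.choose s * (a - d) := Nat.mul_le_mul ih (by omega)
      _ = a.choose (d + 1) * b.choose s * (d + 1) := by
        rw [mul_right_comm, ← Nat.choose_succ_right_eq]; ring

lemma choose_mul_choose_lt {a b s d : ℕ} (hsd : s < d) (hsb : s ≤ b) (hda : d ≤ a)
    (hba : b < a) : a.choose s * b.choose d < a.choose d * b.choose s := by
  rcases lt_or_ge b d with hbd | hdb
  · rw [Nat.choose_eq_zero_of_lt hbd, mul_zero]
    exact Nat.mul_pos (Nat.choose_pos hda) (Nat.choose_pos hsb)
  obtain ⟨d, rfl⟩ : ∃ d', d = d' + 1 := ⟨d - 1, by omega⟩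
  have hpos : 0 < a.choose d * b.choose s :=
    Nat.mul_pos (Nat.choose_pos (by omega)) (Nat.choose_pos hsb)
  refine Nat.lt_of_mul_lt_mul_right (a := d + 1) ?_
  calc a.choose s * b.choose (d + 1) * (d + 1)
      = a.choose s * b.choose d * (b - d) := by rw [mul_assoc, Nat.choose_succ_right_eq]; ring
    _ ≤ a.choose d * b.choose s * (b - d) :=
      Nat.mul_le_mul_right _ (choose_mul_choose_le (by omega) hba.le)
    _ < a.choose d * b.choose s * (a - d) := Nat.mul_lt_mul_of_pos_left (by omega) hpos
    _ = a.choose (d + 1) * b.choose s * (d + 1) := by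
      rw [mul_right_comm, ← Nat.choose_succ_right_eq]; ring

section Exchange

variable {u m n d : ℕ} {g : Fin u → Fin m} {x : Fin u} {j : Fin m} {S : Finset (Fin u)}

lemma cost_update_of_notMem (hx : x ∉ S) : cost (update g x j) S = cost g S := by
  have (k : Fin m) : {y ∈ S | update g x j y = k} = {y ∈ S | g y = k} :=
    filter_congr fun y hy => by rw [update_of_ne (ne_of_mem_of_not_mem hy hx)]
  simp only [cost, this]

lemma filter_update_eq_of_ne {k : Fin m} (hkx : k ≠ g x) (hkj : k ≠ j) (T : Finset (Fin u)) :
    {y ∈ T | update g x j y = k} = {y ∈ T | g y = k} := by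
  refine filter_congr fun y _ => ?_
  rcases eq_or_ne y x with rfl | hy
  · simp [hkx.symm, hkj.symm]
  · rw [update_of_ne hy]

lemma cellmates_update_self (hj : j ≠ g x) : cellmates (update g x j) x = fiber g j := by
  ext y
  rcases eq_or_ne y x with rfl | hy
  · simpa [cellmates, fiber] using hj.symm
  · simp [cellmates, fiber, hy]

lemma fiber_update_apply_self (hj : j ≠ g x) :
    fiber (update g x j) (g x) = cellmates g x := by
  ext y
  rcases eq_or_ne y x with rfl | hy
  · simpa [cellmates, fiber] using hj
  · simp [cellmates, fiber, hy]

lemma disjoint_cellmates_fiber (hj : j ≠ g x) : Disjoint (cellmates g x) (fiber g j) :=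
  disjoint_of_subset_left (erase_subset _ _) (disjoint_fiber hj.symm)

lemma notMem_cellmates_union_fiber (hj : j ≠ g x) : x ∉ cellmates g x ∪ fiber g j := by
  simpa [cellmates, fiber] using hj.symm

lemma cost_le_iff_of_mem (hj : j ≠ g x) (hx : x ∈ S) :
    cost g S ≤ d ↔
      (∀ k ≠ g x, k ≠ j → #{y ∈ S \ (cellmates g x ∪ fiber g j) | g y = k} ≤ d) ∧
        #(S ∩ cellmates g x) < d ∧ #(S ∩ fiber g j) ≤ d := by
  have hself : {y ∈ S | g y = g x} = insert x (S ∩ cellmates g x) := by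
    ext y
    rcases eq_or_ne y x with rfl | hy <;> simp [cellmates, fiber, *]
  have hnotMem : x ∉ S ∩ cellmates g x := by simp [cellmates]
  have hfiber : {y ∈ S | g y = j} = S ∩ fiber g j := by
    ext y
    simp [fiber]
  have hother (k : Fin m) (hkx : k ≠ g x) (hkj : k ≠ j) :
      {y ∈ S | g y = k} = {y ∈ S \ (cellmates g x ∪ fiber g j) | g y = k} := by
    ext y
    simp only [cellmates, fiber, mem_filter, mem_sdiff, mem_union, mem_erase, mem_univ, true_and]
    grind
  rw [cost_le_iff]
  constructor
  · intro H
    have Hx := H (g x)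
    rw [hself, card_insert_of_notMem hnotMem] at Hx
    exact ⟨fun k hkx hkj => hother k hkx hkj ▸ H k, by omega, hfiber ▸ H j⟩
  · rintro ⟨Hother, Hx, Hj⟩ k
    by_cases hkx : k = g x
    · rw [hkx, hself, card_insert_of_notMem hnotMem]
      omega
    by_cases hkj : k = j
    · rwa [hkj, hfiber]
    rw [hother k hkx hkj]
    exact Hother k hkx hkj

lemma cost_update_le_iff_of_mem (hj : j ≠ g x) (hx : x ∈ S) :
    cost (update g x j) S ≤ d ↔
      (∀ k ≠ g x, k ≠ j → #{y ∈ S \ (cellmates g x ∪ fiber g j) | g y = k} ≤ d) ∧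
        #(S ∩ cellmates g x) ≤ d ∧ #(S ∩ fiber g j) < d := by
  have hx' : g x ≠ update g x j x := by rw [update_self]; exact hj.symm
  rw [cost_le_iff_of_mem hx' hx, update_self, cellmates_update_self hj,
    fiber_update_apply_self hj, union_comm]
  constructor
  · rintro ⟨H, hB, hA⟩
    exact ⟨fun k hkx hkj => filter_update_eq_of_ne hkx hkj _ ▸ H k hkj hkx, hA, hB⟩
  · rintro ⟨H, hA, hB⟩
    exact ⟨fun k hkj hkx => (filter_update_eq_of_ne hkx hkj _).symm ▸ H k hkx hkj, hB, hA⟩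

lemma mem_idealSets_sdiff_update_iff (hj : j ≠ g x) :
    S ∈ idealSets g n d \ idealSets (update g x j) n d ↔
      x ∈ S ∧ #S = n ∧
        (∀ k ≠ g x, k ≠ j → #{y ∈ S \ (cellmates g x ∪ fiber g j) | g y = k} ≤ d) ∧
        #(S ∩ cellmates g x) < d ∧ #(S ∩ fiber g j) = d := by
  simp only [idealSets, mem_sdiff, mem_filter, mem_Sn]
  by_cases hx : x ∈ S
  · rw [cost_le_iff_of_mem hj hx, cost_update_le_iff_of_mem hj hx]
    constructor
    · rintro ⟨⟨hn, H, hA, hB⟩, hnot⟩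
      exact ⟨hx, hn, H, hA, by by_contra hB'; exact hnot ⟨hn, H, by omega, by omega⟩⟩
    · rintro ⟨-, hn, H, hA, hB⟩
      exact ⟨⟨hn, H, hA, hB.le⟩, fun ⟨_, _, _, hB'⟩ => by omega⟩
  · rw [cost_update_of_notMem hx]
    tauto

lemma mem_idealSets_update_sdiff_iff (hj : j ≠ g x) :
    S ∈ idealSets (update g x j) n d \ idealSets g n d ↔
      x ∈ S ∧ #S = n ∧
        (∀ k ≠ g x, k ≠ j → #{y ∈ S \ (cellmates g x ∪ fiber g j) | g y = k} ≤ d) ∧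
        #(S ∩ cellmates g x) = d ∧ #(S ∩ fiber g j) < d := by
  simp only [idealSets, mem_sdiff, mem_filter, mem_Sn]
  by_cases hx : x ∈ S
  · rw [cost_le_iff_of_mem hj hx, cost_update_le_iff_of_mem hj hx]
    constructor
    · rintro ⟨⟨hn, H, hA, hB⟩, hnot⟩
      exact ⟨hx, hn, H, by by_contra hA'; exact hnot ⟨hn, H, by omega, by omega⟩, hB⟩
    · rintro ⟨-, hn, H, hA, hB⟩
      exact ⟨⟨hn, H, hA.le, hB⟩, fun ⟨_, _, hA', _⟩ => by omega⟩
  · rw [cost_update_of_notMem hx]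
    tauto

/-- `(P, s)` is the shape of the `n`-sets that stop (or start) being ideal when `x` moves to
cell `j`: `P` is their part outside the two cells, `s < d` the load of the cell that is not full. -/
def IsExchangeShape (g : Fin u → Fin m) (x : Fin u) (j : Fin m) (n d : ℕ) (P : Finset (Fin u))
    (s : ℕ) : Prop :=
  x ∈ P ∧ Disjoint P (cellmates g x ∪ fiber g j) ∧
    (∀ k ≠ g x, k ≠ j → #{y ∈ P | g y = k} ≤ d) ∧ #P + s + d = n ∧ s < d

open Classical in
lemma filter_idealSets_sdiff_update (hj : j ≠ g x) (P : Finset (Fin u)) (s : ℕ) :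
    {S ∈ idealSets g n d \ idealSets (update g x j) n d |
        S \ (cellmates g x ∪ fiber g j) = P ∧ #(S ∩ cellmates g x) = s} =
      if IsExchangeShape g x j n d P s then setsWithTrace (cellmates g x) (fiber g j) P s d
      else ∅ := by
  ext S
  have hcard := card_eq_card_sdiff_add_card_inter_add_card_inter (disjoint_cellmates_fiber hj) S
  have hx : x ∈ S ↔ x ∈ S \ (cellmates g x ∪ fiber g j) := by
    simp [notMem_cellmates_union_fiber hj]
  simp only [mem_filter, mem_idealSets_sdiff_update_iff hj]
  split_ifs with hc
  · simp only [setsWithTrace, mem_filter, mem_univ, true_and]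
    constructor
    · rintro ⟨⟨-, -, -, -, hB⟩, hP, hA⟩
      exact ⟨hP, hA, hB⟩
    · rintro ⟨rfl, hA, hB⟩
      obtain ⟨hxP, -, H, hn, hs⟩ := hc
      exact ⟨⟨hx.2 hxP, by omega, H, by omega, hB⟩, rfl, hA⟩
  · simp only [notMem_empty, iff_false]
    rintro ⟨⟨hxS, hn, H, hA, hB⟩, rfl, rfl⟩
    exact hc ⟨hx.1 hxS, disjoint_sdiff_self_left, H, by omega, hA⟩

open Classical in
lemma filter_idealSets_update_sdiff (hj : j ≠ g x) (P : Finset (Fin u)) (s : ℕ) :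
    {S ∈ idealSets (update g x j) n d \ idealSets g n d |
        S \ (cellmates g x ∪ fiber g j) = P ∧ #(S ∩ fiber g j) = s} =
      if IsExchangeShape g x j n d P s then setsWithTrace (cellmates g x) (fiber g j) P d s
      else ∅ := by
  ext S
  have hcard := card_eq_card_sdiff_add_card_inter_add_card_inter (disjoint_cellmates_fiber hj) S
  have hx : x ∈ S ↔ x ∈ S \ (cellmates g x ∪ fiber g j) := by
    simp [notMem_cellmates_union_fiber hj]
  simp only [mem_filter, mem_idealSets_update_sdiff_iff hj]
  split_ifs with hc
  · simp only [setsWithTrace, mem_filter, mem_univ, true_and]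
    constructor
    · rintro ⟨⟨-, -, -, hA, -⟩, hP, hB⟩
      exact ⟨hP, hA, hB⟩
    · rintro ⟨rfl, hA, hB⟩
      obtain ⟨hxP, -, H, hn, hs⟩ := hc
      exact ⟨⟨hx.2 hxP, by omega, H, hA, by omega⟩, rfl, hB⟩
  · simp only [notMem_empty, iff_false]
    rintro ⟨⟨hxS, hn, H, hA, hB⟩, rfl, rfl⟩
    exact hc ⟨hx.1 hxS, disjoint_sdiff_self_left, H, by omega, hB⟩

lemma card_filter_idealSets_sdiff_update_le (hj : j ≠ g x)
    (hgap : #(fiber g j) ≤ #(cellmates g x)) (P : Finset (Fin u)) (s : ℕ) :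
    #{S ∈ idealSets g n d \ idealSets (update g x j) n d |
        S \ (cellmates g x ∪ fiber g j) = P ∧ #(S ∩ cellmates g x) = s} ≤
      #{S ∈ idealSets (update g x j) n d \ idealSets g n d |
        S \ (cellmates g x ∪ fiber g j) = P ∧ #(S ∩ fiber g j) = s} := by
  rw [filter_idealSets_sdiff_update hj, filter_idealSets_update_sdiff hj]
  split_ifs with hc
  · rw [card_setsWithTrace (disjoint_cellmates_fiber hj) hc.2.1,
      card_setsWithTrace (disjoint_cellmates_fiber hj) hc.2.1]
    exact choose_mul_choose_le hc.2.2.2.2.le hgap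
  · rfl

lemma card_filter_idealSets_sdiff_update_lt (hj : j ≠ g x)
    (hgap : #(fiber g j) < #(cellmates g x)) (hd : d ≤ #(cellmates g x))
    {P : Finset (Fin u)} {s : ℕ} (hc : IsExchangeShape g x j n d P s) (hs : s ≤ #(fiber g j)) :
    #{S ∈ idealSets g n d \ idealSets (update g x j) n d |
        S \ (cellmates g x ∪ fiber g j) = P ∧ #(S ∩ cellmates g x) = s} <
      #{S ∈ idealSets (update g x j) n d \ idealSets g n d |
        S \ (cellmates g x ∪ fiber g j) = P ∧ #(S ∩ fiber g j) = s} := by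
  rw [filter_idealSets_sdiff_update hj, filter_idealSets_update_sdiff hj, if_pos hc, if_pos hc,
    card_setsWithTrace (disjoint_cellmates_fiber hj) hc.2.1,
    card_setsWithTrace (disjoint_cellmates_fiber hj) hc.2.1]
  exact choose_mul_choose_lt hc.2.2.2.2 hs hd hgap

lemma exists_isExchangeShape (hj : j ≠ g x) (hd : 0 < d) (hdn : d < n) {S₀ : Finset (Fin u)}
    (hS₀ : S₀ ∈ idealSets g n d) :
    ∃ P s, IsExchangeShape g x j n d P s ∧ s ≤ #(fiber g j) := by
  simp only [idealSets, mem_filter, mem_Sn, cost_le_iff] at hS₀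
  obtain ⟨hn, hcost⟩ := hS₀
  have hcard :=
    card_eq_card_sdiff_add_card_inter_add_card_inter (disjoint_fiber (h := g) hj.symm) S₀
  set O := S₀ \ (fiber g (g x) ∪ fiber g j)
  have hfib (k : Fin m) : S₀ ∩ fiber g k = {y ∈ S₀ | g y = k} := by ext; simp [fiber]
  have hx := hcost (g x)
  have hjd := hcost j
  have hjB : #(S₀ ∩ fiber g j) ≤ #(fiber g j) := card_le_card inter_subset_right
  rw [← hfib] at hx hjd
  -- `P` is `x` together with as much of the rest `O` of `S₀` as fits; `s` takes up the slack.
  obtain ⟨O', hO', hcardO'⟩ := exists_subset_card_eq (min_le_left #O (n - 1 - d))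
  have hxO' : x ∉ O' := fun h => by simpa [O, fiber] using hO' h
  refine ⟨insert x O', n - 1 - d - #O', ⟨mem_insert_self x O', ?_, fun k hkx hkj => ?_, ?_, ?_⟩, ?_⟩
  · rw [disjoint_insert_left]
    refine ⟨notMem_cellmates_union_fiber hj, disjoint_of_subset_left hO' ?_⟩
    exact disjoint_of_subset_right (union_subset_union (erase_subset _ _) subset_rfl)
      disjoint_sdiff_self_left
  · refine le_trans (card_le_card fun y hy => ?_) (hcost k)
    simp only [mem_filter, mem_insert] at hy ⊢
    rcases hy with ⟨rfl | hy, hgy⟩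
    · exact absurd hgy hkx.symm
    · exact ⟨(mem_sdiff.mp (hO' hy)).1, hgy⟩
  · rw [card_insert_of_notMem hxO']
    omega
  · omega
  · omega

theorem card_idealSets_lt_card_idealSets_update (hj : j ≠ g x) (hd : 0 < d) (hdn : d < n)
    (hgap : #(fiber g j) + 2 ≤ #(fiber g (g x))) (hdx : d < #(fiber g (g x)))
    (hne : (idealSets g n d).Nonempty) :
    #(idealSets g n d) < #(idealSets (update g x j) n d) := by
  have hA : #(cellmates g x) + 1 = #(fiber g (g x)) := card_erase_add_one (by simp [fiber])
  obtain ⟨S₀, hS₀⟩ := hne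
  obtain ⟨P, s, hc, hs⟩ := exists_isExchangeShape hj hd hdn hS₀
  rw [← card_sdiff_lt_card_sdiff_iff,
    card_eq_sum_card_fiberwise (t := univ ×ˢ range (n + 1))
      (f := fun S => (S \ (cellmates g x ∪ fiber g j), #(S ∩ cellmates g x))) ?_,
    card_eq_sum_card_fiberwise (t := univ ×ˢ range (n + 1))
      (f := fun S => (S \ (cellmates g x ∪ fiber g j), #(S ∩ fiber g j))) ?_]
  · simp only [Prod.ext_iff]
    refine sum_lt_sum (fun _ _ => card_filter_idealSets_sdiff_update_le hj (by omega) _ _)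
      ⟨(P, s), ?_, card_filter_idealSets_sdiff_update_lt hj (by omega) (by omega) hc hs⟩
    have := hc.2.2.2.2
    simp only [mem_product, mem_univ, mem_range, true_and]
    omega
  all_goals
    intro S hS
    have hn : #S = n := mem_Sn.1 (mem_filter.1 (mem_sdiff.1 (mem_coe.1 hS)).1).1
    simpa [Nat.lt_succ_iff, ← hn] using card_le_card inter_subset_left

end Exchange

section Maximum

variable {u m n d : ℕ}

lemma exists_card_idealSets_eq_Mc (hm : 0 < m) :
    ∃ h : Fin u → Fin m, #(idealSets h n d) = Mc u m n d := by
  have : Nonempty (Fin m) := ⟨⟨0, hm⟩⟩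
  obtain ⟨h, -, hh⟩ :=
    exists_mem_eq_sup univ univ_nonempty fun h : Fin u → Fin m => #(idealSets h n d)
  exact ⟨h, hh.symm⟩

lemma Mc_pos (hm : 0 < m) (hnu : n ≤ u) (hdvd : m ∣ n) (hd : n / m ≤ d) : 0 < Mc u m n d := by
  obtain ⟨h, S, hS, hcost⟩ := exists_mem_Sn_cost_le_div hm hnu hdvd
  exact (card_pos.2 ⟨S, mem_filter.2 ⟨hS, hcost.trans hd⟩⟩).trans_le (card_idealSets_le_Mc h)

lemma card_idealSets_lt_Mc_of_not_isBalanced {g : Fin u → Fin m} (hd : 0 < d) (hdn : d < n)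
    (hdu : d < u / m) (hMc : 0 < Mc u m n d) (hg : ¬IsBalanced g) :
    #(idealSets g n d) < Mc u m n d := by
  rcases (idealSets g n d).eq_empty_or_nonempty with hempty | hne
  · rwa [hempty, card_empty]
  obtain ⟨i, j, hgap, hi⟩ := exists_card_fiber_gap_of_not_isBalanced hg
  obtain ⟨x, hx⟩ : (fiber g i).Nonempty := card_pos.1 (by omega)
  obtain rfl : g x = i := by simpa [fiber] using hx
  exact (card_idealSets_lt_card_idealSets_update (by rintro rfl; omega) hd hdn hgap (by omega)
    hne).trans_le (card_idealSets_le_Mc _)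

end Maximum

theorem balance_maximizes_Mc_general (u m n d : ℕ) (hdvd : m ∣ n)
    (hα : 1 ≤ n / m) (hαd : n / m ≤ d) (hdn : d < n) (hdβ : d < u / m)
    (h : Fin u → Fin m) :
    ((Sn u n).filter fun S => cost h S ≤ d).card = Mc u m n d ↔ IsBalanced h := by
  have hm : 0 < m := Nat.pos_of_ne_zero (by rintro rfl; simp at hα)
  have hnu : n < u := Nat.lt_of_div_lt_div (hαd.trans_lt hdβ)
  have hlt (g : Fin u → Fin m) (hg : ¬IsBalanced g) : #(idealSets g n d) < Mc u m n d :=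
    card_idealSets_lt_Mc_of_not_isBalanced (hα.trans hαd) hdn hdβ (Mc_pos hm hnu.le hdvd hαd) hg
  obtain ⟨h₀, hh₀⟩ := exists_card_idealSets_eq_Mc (u := u) (n := n) (d := d) hm
  have hb₀ : IsBalanced h₀ := by_contra fun hb => (hlt h₀ hb).ne hh₀
  refine ⟨fun heq => by_contra fun hb => (hlt h hb).ne heq, fun hb => ?_⟩
  obtain ⟨σ, π, hσπ⟩ := hb.exists_comp_eq hb₀
  exact (card_idealSets_eq_of_comp_eq hσπ).trans hh₀

/-- **Balance maximizes `M_c`** (Theorem 3.3): a hash function hashes the maximum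
possible number `M_c` of `n`-element subsets `c`-ideally iff it is balanced. -/
theorem balance_maximizes_Mc (u m n d : ℕ) (hu : 0 < u) (hm : 2 ≤ m) (hn : 0 < n)
    (hmn : m ≤ n) (hnu : n ^ 2 ≤ u) (hdvd : m ∣ n)
    (hα : 1 ≤ n / m) (hαd : n / m ≤ d) (hdn : d < n) (hdβ : d < u / m)
    (h : Fin u → Fin m) :
    ((Sn u n).filter fun S => cost h S ≤ d).card = Mc u m n d ↔ IsBalanced h :=
  balance_maximizes_Mc_general u m n d hdvd hα hαd hdn hdβ h
end

section
/- Stirling lower bound for the perfect case (precise form of Lemma 3.6): assume m divides u as well as n, set β := u/m and α := n/m with α ≥ 1 and n < u. Then C(u,n) / C(β,α)^m ≥ (2πα)^{(m−1)/2} · (1 − n/u)^{(m−1)/2} · m^{−1/2} · exp( 1/(12u+1) + m/(12(β−α)+1) + m/(12α+1) − 1/(12(u−n)) − 1/(12n) − m/(12β) ), where C(a,b) denotes the binomial coefficient 'a choose b'. -/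
/-!
Write `L(x) = log (2πx)/2 + x log x - x` for the logarithm of Stirling's approximation of `x!`.
Robbins' bounds put `log k!` between `L(k) + 1/(12k+1)` and `L(k) + 1/(12k)`, hence bound
`log C(n, k)` by `L(n) - L(k) - L(n - k)` up to these corrections. For `u = mβ`, `n = mα` the
terms `x log x - x` of `L` cancel exactly in `log C(u, n) - m log C(β, α)`, and what survives of
the square-root factors is `(m - 1)/2 · log (2πα (1 - n/u)) - log m / 2`.
-/

open Real Filter Topology

open scoped Nat

theorem log_choose {n k : ℕ} (h : k ≤ n) :
    log (n.choose k) = log n ! - log k ! - log (n - k)! := by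
  have hc : (0 : ℝ) < n.choose k := by exact_mod_cast n.choose_pos h
  have hfac := (n.choose_mul_factorial_mul_factorial h).symm
  rw [← Nat.cast_inj (R := ℝ)] at hfac
  push_cast at hfac
  rw [hfac, log_mul (by positivity) (by positivity), log_mul hc.ne' (by positivity)]
  ring

namespace Stirling

theorem log_stirlingSeq_sdiff_ge (n : ℕ) :
    1 / (12 * (n + 1 : ℝ) + 1) - 1 / (12 * (n + 2 : ℝ) + 1) ≤
      log (stirlingSeq (n + 1)) - log (stirlingSeq (n + 2)) := by
  set r := ((1 : ℝ) / (2 * ↑(n + 1) + 1)) ^ 2 with hr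
  have hr3 : r < 3 := by grw [hr, ← n.zero_le]; norm_num
  have hr0 : 0 ≤ r := sq_nonneg _
  have hsum : HasSum (fun j : ℕ ↦ (r / 3) ^ (j + 1)) (r / (3 - r)) := by
    have := (hasSum_geometric_of_lt_one (r := r / 3) (by positivity) (by linarith)).mul_left
      (r / 3)
    rw [show r / 3 * (1 - r / 3)⁻¹ = r / (3 - r) by field_simp [(by linarith : 3 - r ≠ 0)]]
      at this
    simpa only [← pow_succ'] using this
  -- Robbins' comparison: `3 ^ (j + 1) ≥ 2 (j + 1) + 1` bounds the series below by a geometric one.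
  have hterm (j : ℕ) : (r / 3) ^ (j + 1) ≤ 1 / (2 * ↑(j + 1) + 1) * r ^ (j + 1) := by
    have hpow : (2 * ↑(j + 1) + 1 : ℝ) ≤ 3 ^ (j + 1) := by
      have := one_add_mul_le_pow (a := (2 : ℝ)) (by norm_num) (j + 1)
      norm_num at this; push_cast; linarith
    rw [div_pow, one_div_mul_eq_div]
    gcongr
  refine le_trans ?_ (hasSum_le hterm hsum (log_stirlingSeq_sdiff_hasSum n))
  rw [hr]
  push_cast
  field_simp
  have hn : (0 : ℝ) ≤ n := n.cast_nonneg
  rw [le_div_iff₀ (by nlinarith)]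
  nlinarith

theorem tendsto_log_stirlingSeq_sub_one_div (c : ℝ) :
    Tendsto (fun k : ℕ ↦ log (stirlingSeq (k + 1)) - 1 / (12 * (k + 1 : ℝ) + c)) atTop
      (𝓝 (log √π)) := by
  have hlog := (tendsto_stirlingSeq_sqrt_pi.log (by positivity)).comp (tendsto_add_atTop_nat 1)
  have hinv : Tendsto (fun k : ℕ ↦ 1 / (12 * (k + 1 : ℝ) + c)) atTop (𝓝 0) :=
    tendsto_const_nhds.div_atTop <| tendsto_atTop_add_const_right _ c <|
      (tendsto_natCast_atTop_atTop.atTop_add tendsto_const_nhds).const_mul_atTop (by norm_num)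
  simpa using hlog.sub hinv

theorem log_stirlingSeq_le {n : ℕ} (hn : n ≠ 0) :
    log (stirlingSeq n) ≤ log √π + 1 / (12 * n) := by
  obtain ⟨k, rfl⟩ := Nat.exists_eq_add_one_of_ne_zero hn
  have hmono : Monotone fun k : ℕ ↦ log (stirlingSeq (k + 1)) - 1 / (12 * (k + 1 : ℝ)) :=
    monotone_nat_of_le_succ fun k ↦ by
      have := log_stirlingSeq_sdiff_le (k + 1)
      push_cast at this ⊢
      rw [show (1 : ℝ) / (12 * (k + 1) * (k + 1 + 1)) = 1 / (12 * (k + 1)) - 1 / (12 * (k + 1 + 1))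
        by field_simp; ring] at this
      linarith
  have := hmono.ge_of_tendsto (by simpa using tendsto_log_stirlingSeq_sub_one_div 0) k
  push_cast
  linarith

theorem log_stirlingSeq_ge {n : ℕ} (hn : n ≠ 0) :
    log √π + 1 / (12 * n + 1) ≤ log (stirlingSeq n) := by
  obtain ⟨k, rfl⟩ := Nat.exists_eq_add_one_of_ne_zero hn
  have hanti : Antitone fun k : ℕ ↦ log (stirlingSeq (k + 1)) - 1 / (12 * (k + 1 : ℝ) + 1) :=
    antitone_nat_of_succ_le fun k ↦ by
      have := log_stirlingSeq_sdiff_ge k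
      push_cast
      rw [add_assoc (k : ℝ), one_add_one_eq_two]
      linarith
  have := hanti.le_of_tendsto (tendsto_log_stirlingSeq_sub_one_div 1) k
  push_cast
  linarith

noncomputable def logStirling (x : ℝ) : ℝ := log (2 * π * x) / 2 + x * log x - x

theorem log_factorial_eq_logStirling_add {n : ℕ} (hn : n ≠ 0) :
    log n ! = logStirling n + (log (stirlingSeq n) - log √π) := by
  have hn' : (n : ℝ) ≠ 0 := by exact_mod_cast hn
  rw [log_stirlingSeq_formula, logStirling, log_sqrt pi_pos.le, log_div hn' (exp_ne_zero 1),
    log_exp, log_mul (by positivity) hn', log_mul (by positivity) hn',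
    log_mul two_ne_zero pi_ne_zero]
  ring

theorem logStirling_add_le_log_factorial {n : ℕ} (hn : n ≠ 0) :
    logStirling n + 1 / (12 * n + 1) ≤ log n ! := by
  rw [log_factorial_eq_logStirling_add hn]
  linarith [log_stirlingSeq_ge hn]

theorem log_factorial_le_logStirling_add {n : ℕ} (hn : n ≠ 0) :
    log n ! ≤ logStirling n + 1 / (12 * n) := by
  rw [log_factorial_eq_logStirling_add hn]
  linarith [log_stirlingSeq_le hn]

theorem logStirling_sub_add_le_log_choose {n k : ℕ} (hk : k ≠ 0) (hkn : k < n) :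
    logStirling n - logStirling k - logStirling (n - k) +
        (1 / (12 * n + 1) - 1 / (12 * k) - 1 / (12 * (n - k))) ≤ log (n.choose k) := by
  have hfn := logStirling_add_le_log_factorial (n := n) (by omega)
  have hfk := log_factorial_le_logStirling_add hk
  have hfnk := log_factorial_le_logStirling_add (n := n - k) (by omega)
  rw [Nat.cast_sub hkn.le] at hfnk
  rw [log_choose hkn.le]
  linarith

theorem log_choose_le_logStirling_sub_add {n k : ℕ} (hk : k ≠ 0) (hkn : k < n) :
    log (n.choose k) ≤ logStirling n - logStirling k - logStirling (n - k) +
        (1 / (12 * n) - 1 / (12 * k + 1) - 1 / (12 * (n - k) + 1)) := by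
  have hfn := log_factorial_le_logStirling_add (n := n) (by omega)
  have hfk := logStirling_add_le_log_factorial hk
  have hfnk := logStirling_add_le_log_factorial (n := n - k) (by omega)
  rw [Nat.cast_sub hkn.le] at hfnk
  rw [log_choose hkn.le]
  linarith

theorem logStirling_mul {m x : ℝ} (hm : 0 < m) (hx : 0 < x) :
    logStirling (m * x) =
      m * logStirling x - (m - 1) / 2 * log (2 * π * x) + log m / 2 + m * x * log m := by
  have h2π : 2 * π ≠ 0 := by positivity
  simp only [logStirling, mul_left_comm (2 * π) m, log_mul hm.ne' hx.ne',
    log_mul hm.ne' (mul_ne_zero h2π hx.ne')]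
  ring

theorem logStirling_choose_mul_sub {m a b : ℝ} (hm : 0 < m) (ha : 0 < a) (hab : a < b) :
    logStirling (m * b) - logStirling (m * a) - logStirling (m * b - m * a) -
        m * (logStirling b - logStirling a - logStirling (b - a)) =
      (m - 1) / 2 * (log (2 * π * a) + log (1 - a / b)) - log m / 2 := by
  have hb : 0 < b := ha.trans hab
  have hba : 0 < b - a := sub_pos.2 hab
  have h2π : 0 < 2 * π := by positivity
  rw [← mul_sub, logStirling_mul hm hb, logStirling_mul hm ha, logStirling_mul hm hba,
    one_sub_div hb.ne', log_div hba.ne' hb.ne', log_mul h2π.ne' hb.ne', log_mul h2π.ne' ha.ne',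
    log_mul h2π.ne' hba.ne']
  ring

theorem le_log_choose_mul_sub_mul_log_choose {m a b : ℕ} (hm : 0 < m) (ha : a ≠ 0)
    (hab : a < b) :
    (m - 1) / 2 * (log (2 * π * a) + log (1 - a / b)) - log m / 2 +
        (1 / (12 * (m * b) + 1) + m / (12 * (b - a) + 1) + m / (12 * a + 1) -
          1 / (12 * (m * b - m * a)) - 1 / (12 * (m * a)) - m / (12 * b)) ≤
      log ((m * b).choose (m * a)) - m * log (b.choose a) := by
  have hm' : (0 : ℝ) < m := by exact_mod_cast hm
  have hupper := mul_le_mul_of_nonneg_left (log_choose_le_logStirling_sub_add ha hab) hm'.le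
  have hlower := logStirling_sub_add_le_log_choose (Nat.mul_ne_zero hm.ne' ha)
    (Nat.mul_lt_mul_of_pos_left hab hm)
  have hid := logStirling_choose_mul_sub hm' (by positivity) (by exact_mod_cast hab : (a : ℝ) < b)
  push_cast at hlower
  linear_combination hlower + hupper - hid

end Stirling

theorem stirling_lower_bound_perfect_general (u m n : ℕ)
    (hnu : n < u) (hdu : m ∣ u) (hdn : m ∣ n) (hα : 1 ≤ n / m) :
    (Nat.choose u n : ℝ) / (Nat.choose (u / m) (n / m) : ℝ) ^ m ≥
      (2 * π * ((n : ℝ) / m)) ^ (((m : ℝ) - 1) / 2) *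
      (1 - (n : ℝ) / u) ^ (((m : ℝ) - 1) / 2) *
      (m : ℝ) ^ (-(1 / 2) : ℝ) *
      Real.exp (1 / (12 * (u : ℝ) + 1) + (m : ℝ) / (12 * ((u : ℝ) / m - (n : ℝ) / m) + 1)
        + (m : ℝ) / (12 * ((n : ℝ) / m) + 1) - 1 / (12 * ((u : ℝ) - n)) - 1 / (12 * (n : ℝ))
        - (m : ℝ) / (12 * ((u : ℝ) / m))) := by
  have hm : 0 < m := (Nat.div_pos_iff.1 hα).1
  obtain ⟨b, rfl⟩ := hdu
  obtain ⟨a, rfl⟩ := hdn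
  have hm' : (0 : ℝ) < m := Nat.cast_pos.2 hm
  rw [Nat.mul_div_cancel_left _ hm] at hα
  have hab : a < b := Nat.lt_of_mul_lt_mul_left hnu
  simp only [Nat.mul_div_cancel_left _ hm, Nat.cast_mul, mul_div_cancel_left₀ _ hm'.ne',
    mul_div_mul_left _ _ hm'.ne']
  have ha : (0 : ℝ) < a := Nat.cast_pos.2 hα
  have hc₁ : (0 : ℝ) < (m * b).choose (m * a) := by
    exact_mod_cast Nat.choose_pos (Nat.mul_le_mul_left m hab.le)
  have hc₂ : (0 : ℝ) < b.choose a := by exact_mod_cast Nat.choose_pos hab.le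
  have hab' : 0 < 1 - (a : ℝ) / b := by
    rw [sub_pos, div_lt_one (ha.trans (Nat.cast_lt.2 hab))]; exact_mod_cast hab
  refine (log_le_log_iff (by positivity) (div_pos hc₁ (pow_pos hc₂ m))).1 ?_
  rw [log_div hc₁.ne' (by positivity),
    log_pow, log_mul (by positivity) (exp_ne_zero _), log_mul (by positivity) (by positivity),
    log_mul (by positivity) (by positivity), log_rpow (by positivity), log_rpow (by positivity),
    log_rpow (by positivity), log_exp]
  linear_combination Stirling.le_log_choose_mul_sub_mul_log_choose hm (by omega) hab

/-- **Stirling lower bound for the perfect case** (precise form of Lemma 3.6):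
with `β := u/m`, `α := n/m`, `α ≥ 1` and `n < u`,
`C(u,n) / C(β,α)^m ≥ (2πα)^((m−1)/2) · (1 − n/u)^((m−1)/2) · m^(−1/2) ·
exp(1/(12u+1) + m/(12(β−α)+1) + m/(12α+1) − 1/(12(u−n)) − 1/(12n) − m/(12β))`. -/
theorem stirling_lower_bound_perfect (u m n : ℕ) (hm : 0 < m) (hmn : m ≤ n)
    (hnu : n < u) (hdu : m ∣ u) (hdn : m ∣ n) (hα : 1 ≤ n / m) :
    (Nat.choose u n : ℝ) / (Nat.choose (u / m) (n / m) : ℝ) ^ m ≥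
      (2 * π * ((n : ℝ) / m)) ^ (((m : ℝ) - 1) / 2) *
      (1 - (n : ℝ) / u) ^ (((m : ℝ) - 1) / 2) *
      (m : ℝ) ^ (-(1 / 2) : ℝ) *
      Real.exp (1 / (12 * (u : ℝ) + 1) + (m : ℝ) / (12 * ((u : ℝ) / m - (n : ℝ) / m) + 1)
        + (m : ℝ) / (12 * ((n : ℝ) / m) + 1) - 1 / (12 * ((u : ℝ) - n)) - 1 / (12 * (n : ℝ))
        - (m : ℝ) / (12 * ((u : ℝ) / m))) :=
  stirling_lower_bound_perfect_general u m n hnu hdu hdn hα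
end

section
/- Count of 1-ideally hashed sets (equation for M₁ in the proof of Lemma 3.6): assume m divides u and m divides n, and let h : Fin u → Fin m be a hash function all of whose fibers h⁻¹(k) have cardinality exactly u/m. Then the number of n-element finsets S of Fin u with |S ∩ h⁻¹(k)| ≤ n/m for every k ∈ Fin m equals C(u/m, n/m)^m, where C(a,b) denotes the binomial coefficient 'a choose b'. -/
open Finset

/-- **Count of 1-ideally hashed sets** (equation for `M₁` in the proof of Lemma 3.6):
if every fiber of `h : Fin u → Fin m` has cardinality exactly `u/m`, then the number of
`n`-element subsets `S` of `Fin u` with `|S ∩ h⁻¹(k)| ≤ n/m` for every cell `k` equals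
`C(u/m, n/m)^m`. -/
theorem count_one_ideal_sets (u m n : ℕ) (hm : 0 < m) (hmn : m ≤ n) (hnu : n ≤ u)
    (hdu : m ∣ u) (hdn : m ∣ n) (h : Fin u → Fin m)
    (hfib : ∀ k : Fin m, (Finset.univ.filter fun x => h x = k).card = u / m) :
    ((Finset.univ.powersetCard n).filter fun S : Finset (Fin u) =>
        ∀ k : Fin m, (S.filter fun x => h x = k).card ≤ n / m).card
      = Nat.choose (u / m) (n / m) ^ m := by
  classical
  have hmn' : ∑ _k : Fin m, n / m = n := by
    simp [Finset.sum_const, Nat.mul_div_cancel' hdn]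
  set A := (Finset.univ.powersetCard n).filter fun S : Finset (Fin u) =>
    ∀ k : Fin m, (S.filter fun x => h x = k).card ≤ n / m with hA
  set B := Fintype.piFinset fun k : Fin m =>
    (Finset.univ.filter fun x => h x = k).powersetCard (n / m) with hB
  have key : ∀ S ∈ A, ∀ k : Fin m, (S.filter fun x => h x = k).card = n / m := by
    intro S hS
    rw [hA, Finset.mem_filter, Finset.mem_powersetCard] at hS
    obtain ⟨⟨_, hcard⟩, hle⟩ := hS
    have hsum : ∑ k : Fin m, (S.filter fun x => h x = k).card = n := by
      rw [← Finset.card_eq_sum_card_fiberwise (fun x _ => Finset.mem_univ (h x))]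
      exact hcard
    have := (Finset.sum_eq_sum_iff_of_le (fun k _ => hle k)).mp (hsum.trans hmn'.symm)
    exact fun k => this k (Finset.mem_univ k)
  have hcardB : B.card = Nat.choose (u / m) (n / m) ^ m := by
    rw [hB, Fintype.card_piFinset]
    simp [Finset.card_powersetCard, hfib, Finset.prod_const]
  rw [← hcardB]
  apply Finset.card_bij' (fun S _ => fun k => S.filter fun x => h x = k)
    (fun f _ => Finset.univ.biUnion f)
  · intro S hS
    rw [hB, Fintype.mem_piFinset]
    intro k
    rw [Finset.mem_powersetCard]
    exact ⟨Finset.filter_subset_filter _ (Finset.subset_univ S), key S hS k⟩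
  · intro f hf
    rw [hB, Fintype.mem_piFinset] at hf
    have hsub : ∀ k, f k ⊆ Finset.univ.filter fun x => h x = k := fun k =>
      (Finset.mem_powersetCard.mp (hf k)).1
    have hcardf : ∀ k, (f k).card = n / m := fun k =>
      (Finset.mem_powersetCard.mp (hf k)).2
    rw [hA, Finset.mem_filter, Finset.mem_powersetCard]
    refine ⟨⟨Finset.subset_univ _, ?_⟩, ?_⟩
    · rw [Finset.card_biUnion]
      · simp [hcardf, hmn']
      · intro a _ b _ hab
        apply Finset.disjoint_left.mpr
        intro x hxa hxb
        have ha := (Finset.mem_filter.mp (hsub a hxa)).2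
        have hb := (Finset.mem_filter.mp (hsub b hxb)).2
        exact hab (ha ▸ hb ▸ rfl)
    · intro k
      have : ((Finset.univ.biUnion f).filter fun x => h x = k) = f k := by
        ext x
        simp only [Finset.mem_filter, Finset.mem_biUnion, Finset.mem_univ, true_and]
        constructor
        · rintro ⟨⟨j, hj⟩, hk⟩
          have := (Finset.mem_filter.mp (hsub j hj)).2
          exact (this.symm.trans hk) ▸ hj
        · intro hx
          exact ⟨⟨k, hx⟩, (Finset.mem_filter.mp (hsub k hx)).2⟩
      rw [this, hcardf k]
  · intro S hS
    ext x
    simp only [Finset.mem_biUnion, Finset.mem_univ, true_and, Finset.mem_filter]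
    exact ⟨fun ⟨k, hk, _⟩ => hk, fun hx => ⟨h x, hx, rfl⟩⟩
  · intro f hf
    rw [hB, Fintype.mem_piFinset] at hf
    have hsub : ∀ k, f k ⊆ Finset.univ.filter fun x => h x = k := fun k =>
      (Finset.mem_powersetCard.mp (hf k)).1
    funext k
    ext x
    simp only [Finset.mem_filter, Finset.mem_biUnion, Finset.mem_univ, true_and]
    constructor
    · rintro ⟨⟨j, hj⟩, hk⟩
      have := (Finset.mem_filter.mp (hsub j hj)).2
      exact (this.symm.trans hk) ▸ hj
    · intro hx
      exact ⟨⟨k, hx⟩, (Finset.mem_filter.mp (hsub k hx)).2⟩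
end

section
/- Switching perspectives (Lemma 4.5, counting form): for every n-element finset S₀ of Fin u, |{h : Fin u → Fin m ; cost(h,S₀) ≤ d}| · C(u,n) ≤ m^u · M_c, where C(u,n) is the binomial coefficient 'u choose n'. Equivalently, the probability that a uniformly random hash function is c-ideal for a fixed S₀ is at most M_c/C(u,n). -/
open Finset

private lemma count_eq_aux {u m n d : ℕ} (S₀ S : Finset (Fin u)) (hS₀ : S₀.card = n)
    (hS : S.card = n) :
    (Finset.univ.filter fun h : Fin u → Fin m => cost h S ≤ d).card
      = (Finset.univ.filter fun h : Fin u → Fin m => cost h S₀ ≤ d).card := by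
  classical
  have hcard : S₀.card = S.card := by rw [hS₀, hS]
  let σ : Equiv.Perm (Fin u) := (Finset.equivOfCardEq hcard).extendSubtype
  have himg : S₀.image σ = S := by
    apply Finset.eq_of_subset_of_card_le
    · intro y hy
      obtain ⟨x, hx, rfl⟩ := Finset.mem_image.mp hy
      exact (Finset.equivOfCardEq hcard).extendSubtype_mem x hx
    · rw [Finset.card_image_of_injective _ σ.injective, hcard]
  have hcost : ∀ h : Fin u → Fin m, cost (h ∘ σ) S₀ = cost h S := by
    intro h
    unfold cost
    congr 1
    funext k
    rw [← himg, Finset.filter_image, Finset.card_image_of_injective _ σ.injective]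
    rfl
  apply Finset.card_bij' (fun h _ => h ∘ σ) (fun h _ => h ∘ σ.symm)
  · intro h hh
    simp only [Finset.mem_filter, Finset.mem_univ, true_and] at hh ⊢
    rw [hcost]; exact hh
  · intro h hh
    simp only [Finset.mem_filter, Finset.mem_univ, true_and] at hh ⊢
    rw [← hcost (h ∘ σ.symm)]
    have : (h ∘ σ.symm) ∘ σ = h := by funext x; simp
    rw [this]; exact hh
  · intro h _; funext x; simp
  · intro h _; funext x; simp

/-- **Switching perspectives** (Lemma 4.5, counting form): for every `n`-element set `S₀`,
`|{h : cost(h,S₀) ≤ d}| · C(u,n) ≤ m^u · M_c`; i.e., the probability that a uniformly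
random hash function is `c`-ideal for a fixed `S₀` is at most `M_c / C(u,n)`. -/
theorem switching_perspectives (u m n d : ℕ) (hu : 0 < u) (hm : 0 < m) (hn : 0 < n)
    (hmn : m ≤ n) (hnu : n ^ 2 ≤ u) (hdvd : m ∣ n) (hαd : n / m ≤ d)
    (S₀ : Finset (Fin u)) (hS₀ : S₀.card = n) :
    (Finset.univ.filter fun h : Fin u → Fin m => cost h S₀ ≤ d).card * Nat.choose u n
      ≤ m ^ u * Mc u m n d := by
  classical
  classical
  have key : ∑ S ∈ Sn u n, (Finset.univ.filter fun h : Fin u → Fin m => cost h S ≤ d).card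
      = ∑ h : Fin u → Fin m, ((Sn u n).filter fun S => cost h S ≤ d).card := by
    simp_rw [Finset.card_filter]
    exact Finset.sum_comm
  have lhs : ∑ S ∈ Sn u n, (Finset.univ.filter fun h : Fin u → Fin m => cost h S ≤ d).card
      = (Finset.univ.filter fun h : Fin u → Fin m => cost h S₀ ≤ d).card * Nat.choose u n := by
    have h1 : ∑ S ∈ Sn u n, (Finset.univ.filter fun h : Fin u → Fin m => cost h S ≤ d).card
        = ∑ _S ∈ Sn u n, (Finset.univ.filter fun h : Fin u → Fin m => cost h S₀ ≤ d).card :=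
      Finset.sum_congr rfl fun S hS => count_eq_aux S₀ S hS₀
        (Finset.mem_powersetCard.mp hS).2
    rw [h1, Finset.sum_const, smul_eq_mul, mul_comm]
    congr 1
    simp [Sn, Finset.card_powersetCard]
  have rhs : ∑ h : Fin u → Fin m, ((Sn u n).filter fun S => cost h S ≤ d).card
      ≤ m ^ u * Mc u m n d := by
    calc ∑ h : Fin u → Fin m, ((Sn u n).filter fun S => cost h S ≤ d).card
        ≤ ∑ _h : Fin u → Fin m, Mc u m n d :=
          Finset.sum_le_sum fun h _ => Finset.le_sup (f := fun h : Fin u → Fin m => ((Sn u n).filter fun S => cost h S ≤ d).card) (Finset.mem_univ h)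
      _ = m ^ u * Mc u m n d := by
          rw [Finset.sum_const, smul_eq_mul]
          congr 1
          simp [Fintype.card_fun]
  rw [← lhs]
  rw [key] at *
  exact rhs
end

section
/- Negative dependence of multinomial cell loads (Lemma 4.2, specialized to equal cell probabilities): for all positive integers n, m and every natural number L, |{f : Fin n → Fin m ; ∀ k ∈ Fin m, |f⁻¹(k)| ≤ L}| / m^n ≤ ( Σ_{j=0}^{min(L,n)} C(n,j) · (1/m)^j · (1 − 1/m)^{n−j} )^m; that is, the probability that all fibers of a uniformly random function from Fin n to Fin m have size at most L is at most the product over the m cells of the corresponding Binomial(n, 1/m) tail probabilities. -/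
/-!
Condition on the size `t` of the fiber over one cell `a`. Once the `a`-fiber is a fixed `t`-set,
the rest of `f` is an arbitrary function from the other `n - t` points to the other `m - 1` cells,
so the conditional probability that all fibers over a set `S ∌ a` of cells have at most `L`
points is `c (n - t) / (m - 1) ^ (n - t)`, where `c r` counts such functions on `r` points.
Deleting a point cannot enlarge a fiber, so `c (r + 1) ≤ (m - 1) * c r`: this conditional
probability is nondecreasing in `t`, while the event `t ≤ L` is a lower set in `t`. A
Chebyshev-type sum inequality then makes the two events negatively correlated, and induction over
the cells gives the product bound.
-/

open Finset

lemma card_fiber_subtype_notMem_eq {ι β : Type*} [Fintype ι] [DecidableEq ι] [DecidableEq β]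
    (f : ι → β) {T : Finset ι} {k : β}
    (hk : ∀ x ∈ T, f x ≠ k) : #{y : {x // x ∉ T} | f y = k} = #{x | f x = k} := by
  rw [← filter_true_of_mem (s := {x | f x = k}) (p := (· ∉ T)) fun x hx hxT =>
      hk x hxT (mem_filter.mp hx).2, ← card_subtype (· ∉ T)]
  refine congrArg card (ext fun y => ?_)
  simp

lemma card_filter_card_fiber_le_eq_sum {ι β : Type*} [Fintype ι] [DecidableEq β]
    (s : Finset (ι → β)) (a : β) (L : ℕ) :
    #{f ∈ s | #{x | f x = a} ≤ L}
      = ∑ t ∈ range (min L (Fintype.card ι) + 1), #{f ∈ s | #{x | f x = a} = t} := by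
  rw [card_eq_sum_card_fiberwise (f := fun f => #{x | f x = a}) fun f hf => ?_]
  · refine sum_congr rfl fun t ht => ?_
    rw [filter_filter]
    refine congrArg card (filter_congr fun f _ => ⟨And.right, fun hft => ⟨?_, hft⟩⟩)
    have := mem_range.mp ht
    omega
  · have := card_le_univ ({x | f x = a} : Finset ι)
    have := (mem_filter.mp hf).2
    simp only [coe_range, Set.mem_Iio]
    omega

lemma sum_mul_sum_le_sum_mul_sum_of_subset {ι R : Type*} [DecidableEq ι] [CommSemiring R]
    [PartialOrder R] [IsOrderedAddMonoid R] {I J : Finset ι} (hIJ : I ⊆ J) (A B : ι → R)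
    (h : ∀ s ∈ I, ∀ t ∈ J \ I, B s * A t ≤ A s * B t) :
    (∑ s ∈ I, B s) * (∑ t ∈ J, A t) ≤ (∑ s ∈ I, A s) * (∑ t ∈ J, B t) := by
  rw [← sum_sdiff hIJ (f := A), ← sum_sdiff hIJ (f := B), mul_add, mul_add,
    mul_comm (∑ s ∈ I, B s) (∑ s ∈ I, A s)]
  refine add_le_add_left ?_ _
  rw [sum_mul_sum, sum_mul_sum]
  exact sum_le_sum fun s hs => sum_le_sum fun t ht => h s hs t ht

section FiberCounts

variable {ι κ β : Type*} [Fintype ι] [DecidableEq ι] [Fintype κ] [DecidableEq κ] [Fintype β]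
  [DecidableEq β]

variable (ι) in
def fiberBounded (S : Finset β) (L : ℕ) : Finset (ι → β) :=
  {f | ∀ k ∈ S, #{x | f x = k} ≤ L}

variable (ι) in
def fiberBoundedAvoiding (a : β) (S : Finset β) (L : ℕ) : Finset (ι → β) :=
  {g ∈ fiberBounded ι S L | ∀ x, g x ≠ a}

@[simp]
lemma mem_fiberBounded {S : Finset β} {L : ℕ} {f : ι → β} :
    f ∈ fiberBounded ι S L ↔ ∀ k ∈ S, #{x | f x = k} ≤ L := by
  simp [fiberBounded]

@[simp]
lemma mem_fiberBoundedAvoiding {a : β} {S : Finset β} {L : ℕ} {g : ι → β} :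
    g ∈ fiberBoundedAvoiding ι a S L ↔ (∀ k ∈ S, #{x | g x = k} ≤ L) ∧ ∀ x, g x ≠ a := by
  simp [fiberBoundedAvoiding]

lemma card_fiberBoundedAvoiding_congr (e : ι ≃ κ) (a : β) (S : Finset β) (L : ℕ) :
    #(fiberBoundedAvoiding ι a S L) = #(fiberBoundedAvoiding κ a S L) := by
  refine card_equiv (e.arrowCongr (Equiv.refl β)) fun g => ?_
  have hfiber (k : β) : #{y | g (e.symm y) = k} = #{x | g x = k} :=
    card_equiv e.symm fun y => by simp
  simp [hfiber, e.symm.forall_congr_left]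

lemma card_fiberBoundedAvoiding_succ_le (r : ℕ) (a : β) (S : Finset β) (L : ℕ) :
    #(fiberBoundedAvoiding (Fin (r + 1)) a S L)
      ≤ #(fiberBoundedAvoiding (Fin r) a S L) * (Fintype.card β - 1) := by
  rw [← card_univ, ← card_erase_of_mem (mem_univ a), ← card_product]
  refine card_le_card_of_injOn (fun g => (Fin.tail g, g 0)) (fun g hg => ?_) fun g _ g' _ h => ?_
  · rw [mem_coe, mem_fiberBoundedAvoiding] at hg
    simp only [coe_product, Set.mem_prod, mem_coe, mem_fiberBoundedAvoiding, coe_erase,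
      coe_univ, Set.mem_sdiff, Set.mem_univ, Set.mem_singleton_iff, true_and]
    refine ⟨⟨fun k hk => (card_le_card_of_injOn Fin.succ (fun x hx => ?_)
      (Fin.succ_injective r).injOn).trans (hg.1 k hk), fun x => hg.2 x.succ⟩, hg.2 0⟩
    exact mem_filter.mpr ⟨mem_univ _, (mem_filter.mp hx).2⟩
  · simp only [Prod.mk.injEq] at h
    rw [← Fin.cons_self_tail g, ← Fin.cons_self_tail g', h.1, h.2]

lemma card_fiberBoundedAvoiding_mul_pow_le {r r' : ℕ} (h : r ≤ r') (a : β) (S : Finset β)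
    (L : ℕ) :
    #(fiberBoundedAvoiding (Fin r') a S L) * (Fintype.card β - 1) ^ r
      ≤ (Fintype.card β - 1) ^ r' * #(fiberBoundedAvoiding (Fin r) a S L) := by
  induction r', h using Nat.le_induction with
  | base => rw [mul_comm]
  | succ r' _ ih =>
    calc #(fiberBoundedAvoiding (Fin (r' + 1)) a S L) * (Fintype.card β - 1) ^ r
        ≤ #(fiberBoundedAvoiding (Fin r') a S L) * (Fintype.card β - 1) ^ r
            * (Fintype.card β - 1) := by
          rw [mul_right_comm]
          gcongr
          exact card_fiberBoundedAvoiding_succ_le r' a S L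
      _ ≤ (Fintype.card β - 1) ^ r' * #(fiberBoundedAvoiding (Fin r) a S L)
            * (Fintype.card β - 1) := by gcongr
      _ = _ := by ring

lemma card_filter_fiber_eq {a : β} {S : Finset β} (ha : a ∉ S) (L : ℕ) (T : Finset ι) :
    #{f ∈ fiberBounded ι S L | ({x | f x = a} : Finset ι) = T}
      = #(fiberBoundedAvoiding (Fin (Fintype.card ι - #T)) a S L) := by
  have hcard : Fintype.card {x // x ∉ T} = Fintype.card ι - #T := by
    rw [Fintype.card_subtype_compl, Fintype.card_coe]
  rw [← card_fiberBoundedAvoiding_congr (Fintype.equivFinOfCardEq hcard)]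
  have hfiber (f : ι → β) (hf : ∀ x ∈ T, f x = a) (k : β) (hk : k ∈ S) :
      #{y : {x // x ∉ T} | f y = k} = #{x | f x = k} :=
    card_fiber_subtype_notMem_eq f fun x hx hfx => ha (by rwa [← hf x hx, hfx])
  have hT (f : ι → β) : ({x | f x = a} : Finset ι) = T ↔ ∀ x, x ∈ T ↔ f x = a := by
    simp only [Finset.ext_iff, mem_filter, mem_univ, true_and]
    exact forall_congr' fun x => Iff.comm
  refine card_nbij' (fun f x => f x) (fun g x => if h : x ∈ T then a else g ⟨x, h⟩)
    (fun f hf => ?_) (fun g hg => ?_) (fun f hf => ?_) (fun g _ => ?_)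
  · obtain ⟨hbdd, hfT⟩ := by simpa only [mem_coe, mem_filter, mem_fiberBounded, hT] using hf
    simp only [mem_coe, mem_fiberBoundedAvoiding]
    refine ⟨fun k hk => (hfiber f (fun x hx => (hfT x).mp hx) k hk).trans_le (hbdd k hk),
      fun y hy => y.2 ((hfT y).mpr hy)⟩
  · obtain ⟨hbdd, hga⟩ := by simpa only [mem_coe, mem_fiberBoundedAvoiding] using hg
    have hfT (x : ι) : x ∈ T ↔ (if h : x ∈ T then a else g ⟨x, h⟩) = a := by
      by_cases hx : x ∈ T <;> simp [hx, hga]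
    simp only [mem_coe, mem_filter, mem_fiberBounded, hT]
    refine ⟨fun k hk => ?_, hfT⟩
    rw [← hfiber _ (fun x hx => (hfT x).mp hx) k hk]
    convert hbdd k hk using 4 with y
    simp [y.2]
  · obtain ⟨-, hfT⟩ := by simpa only [mem_coe, mem_filter, mem_fiberBounded, hT] using hf
    funext x
    by_cases hx : x ∈ T
    · simp [hx, (hfT x).mp hx]
    · simp [hx]
  · funext y
    simp [y.2]

lemma card_filter_card_fiber_eq {a : β} {S : Finset β} (ha : a ∉ S) (L t : ℕ) :
    #{f ∈ fiberBounded ι S L | #{x | f x = a} = t}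
      = (Fintype.card ι).choose t
        * #(fiberBoundedAvoiding (Fin (Fintype.card ι - t)) a S L) := by
  rw [card_eq_sum_card_fiberwise (f := fun f => ({x | f x = a} : Finset ι))
    (t := powersetCard t univ) fun f hf => by simpa using (mem_filter.mp hf).2]
  rw [sum_congr rfl fun T hT => ?_, sum_const, card_powersetCard, card_univ, smul_eq_mul]
  rw [filter_filter, ← (mem_powersetCard_univ.mp hT), ← card_filter_fiber_eq ha]
  refine congrArg card (filter_congr fun f _ => ⟨And.right, fun hfT => ⟨?_, hfT⟩⟩)
  rw [hfT, mem_powersetCard_univ.mp hT]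

lemma card_fiberBounded_insert_mul_le {a : β} {S : Finset β} (ha : a ∉ S) (L : ℕ) :
    #(fiberBounded ι (insert a S) L) * Fintype.card β ^ Fintype.card ι
      ≤ (∑ t ∈ range (min L (Fintype.card ι) + 1),
          (Fintype.card ι).choose t * (Fintype.card β - 1) ^ (Fintype.card ι - t))
        * #(fiberBounded ι S L) := by
  set n := Fintype.card ι
  set q := Fintype.card β - 1
  set c : ℕ → ℕ := fun r => #(fiberBoundedAvoiding (Fin r) a S L)
  have hsum (L' : ℕ) : #{f ∈ fiberBounded ι S L | #{x | f x = a} ≤ L'}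
      = ∑ t ∈ range (min L' n + 1), n.choose t * c (n - t) := by
    rw [card_filter_card_fiber_le_eq_sum]
    exact sum_congr rfl fun t _ => card_filter_card_fiber_eq ha L t
  have hinsert :
      fiberBounded ι (insert a S) L = {f ∈ fiberBounded ι S L | #{x | f x = a} ≤ L} := by
    ext f
    simp [and_comm]
  have hall : fiberBounded ι S L = {f ∈ fiberBounded ι S L | #{x | f x = a} ≤ n} :=
    (filter_true_of_mem fun f _ => card_le_univ _).symm
  have hpow : Fintype.card β ^ n = ∑ t ∈ range (n + 1), n.choose t * q ^ (n - t) := by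
    rw [← Nat.sub_add_cancel (Fintype.card_pos_iff.mpr ⟨a⟩), add_comm, add_pow]
    simp [q, mul_comm]
  rw [hinsert, hsum, hall, hsum, min_self, hpow]
  refine sum_mul_sum_le_sum_mul_sum_of_subset (range_subset_range.mpr (by omega)) _ _
    fun s hs t ht => ?_
  have hst : s ≤ t := by
    simp only [mem_sdiff, mem_range] at hs ht
    omega
  have key : c (n - s) * q ^ (n - t) ≤ q ^ (n - s) * c (n - t) :=
    card_fiberBoundedAvoiding_mul_pow_le (Nat.sub_le_sub_left hst n) a S L
  calc n.choose s * c (n - s) * (n.choose t * q ^ (n - t))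
      = n.choose s * n.choose t * (c (n - s) * q ^ (n - t)) := by ring
    _ ≤ n.choose s * n.choose t * (q ^ (n - s) * c (n - t)) := Nat.mul_le_mul_left _ key
    _ = n.choose s * q ^ (n - s) * (n.choose t * c (n - t)) := by ring

lemma card_fiberBounded_mul_pow_le (S : Finset β) (L : ℕ) :
    #(fiberBounded ι S L) * (Fintype.card β ^ Fintype.card ι) ^ #S
      ≤ (∑ t ∈ range (min L (Fintype.card ι) + 1),
          (Fintype.card ι).choose t * (Fintype.card β - 1) ^ (Fintype.card ι - t)) ^ #S
        * Fintype.card β ^ Fintype.card ι := by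
  set T := ∑ t ∈ range (min L (Fintype.card ι) + 1),
    (Fintype.card ι).choose t * (Fintype.card β - 1) ^ (Fintype.card ι - t)
  set P := Fintype.card β ^ Fintype.card ι
  induction S using Finset.induction_on with
  | empty => simp [fiberBounded, P]
  | insert a S ha ih =>
    rw [card_insert_of_notMem ha]
    calc #(fiberBounded ι (insert a S) L) * P ^ (#S + 1)
        = #(fiberBounded ι (insert a S) L) * P * P ^ #S := by ring
      _ ≤ T * #(fiberBounded ι S L) * P ^ #S :=
        Nat.mul_le_mul_right _ (card_fiberBounded_insert_mul_le ha L)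
      _ = T * (#(fiberBounded ι S L) * P ^ #S) := by ring
      _ ≤ T * (T ^ #S * P) := by gcongr
      _ = T ^ (#S + 1) * P := by ring

end FiberCounts

lemma sum_choose_mul_inv_pow_eq {m : ℕ} (hm : 0 < m) {n k : ℕ} (hk : k ≤ n + 1) :
    ∑ j ∈ range k, (n.choose j : ℝ) * (1 / m) ^ j * (1 - 1 / m) ^ (n - j)
      = ((∑ j ∈ range k, n.choose j * (m - 1) ^ (n - j) : ℕ) : ℝ) / m ^ n := by
  rw [Nat.cast_sum, sum_div]
  refine sum_congr rfl fun j hj => ?_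
  have hjn : j ≤ n := by
    have := mem_range.mp hj
    omega
  have hm' : (m : ℝ) ≠ 0 := by positivity
  have hpow : (m : ℝ) ^ n = m ^ j * m ^ (n - j) := by rw [← pow_add, Nat.add_sub_cancel' hjn]
  rw [Nat.cast_mul, Nat.cast_pow, Nat.cast_sub hm, Nat.cast_one, hpow, one_sub_div hm',
    div_pow, div_pow, one_pow]
  field_simp

theorem multinomial_negative_dependence_general (n m L : ℕ) (hm : 0 < m) :
    ((Finset.univ.filter fun f : Fin n → Fin m =>
        ∀ k : Fin m, (Finset.univ.filter fun x => f x = k).card ≤ L).card : ℝ) / m ^ n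
      ≤ (∑ j ∈ Finset.range (min L n + 1),
          (Nat.choose n j : ℝ) * (1 / m) ^ j * (1 - 1 / m) ^ (n - j)) ^ m := by
  have hcount := card_fiberBounded_mul_pow_le (ι := Fin n) (univ : Finset (Fin m)) L
  simp only [Fintype.card_fin, card_univ] at hcount
  have hfilter : (Finset.univ.filter fun f : Fin n → Fin m =>
      ∀ k : Fin m, (Finset.univ.filter fun x => f x = k).card ≤ L)
        = fiberBounded (Fin n) univ L := by
    ext f
    simp
  rw [sum_choose_mul_inv_pow_eq hm (by omega), div_pow,
    div_le_div_iff₀ (by positivity) (by positivity), hfilter]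
  exact_mod_cast hcount

/-- **Negative dependence of multinomial cell loads** (Lemma 4.2, equal cell
probabilities): the probability that all fibers of a uniformly random function
`Fin n → Fin m` have size at most `L` is at most the product over the `m` cells of the
corresponding `Binomial(n, 1/m)` tail probabilities. -/
theorem multinomial_negative_dependence (n m L : ℕ) (hn : 0 < n) (hm : 0 < m) :
    ((Finset.univ.filter fun f : Fin n → Fin m =>
        ∀ k : Fin m, (Finset.univ.filter fun x => f x = k).card ≤ L).card : ℝ) / m ^ n
      ≤ (∑ j ∈ Finset.range (min L n + 1),
          (Nat.choose n j : ℝ) * (1 / m) ^ j * (1 - 1 / m) ^ (n - j)) ^ m :=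
  multinomial_negative_dependence_general n m L hm
end

section
/- Binomial tail lower bound (key estimate in the proof of Theorem 4.3): let n = m·α with m ≥ 2 and α ≥ 1 naturals, and let d be a natural number with d + 1 ≤ n. Then Σ_{k=d+1}^{n} C(n,k) · (1/m)^k · (1 − 1/m)^{n−k} ≥ (1 − 1/m)^n · (α/(d+1))^{d+1}; that is, for T ~ Binomial(n, 1/m) one has P(T > d) ≥ (1 − α/n)^n · (α/(d+1))^{d+1}. -/
/-!
The tail `P(T ≥ k)` of `T ~ Binomial(n, p)` dominates its first term
`C(n, k) p^k (1 - p)^(n - k) ≥ (n / k)^k p^k (1 - p)^n`, where `(n / k)^k ≤ C(n, k)` because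
`C(n, k) = ∏_{i < k} (n - i) / (k - i)` and each factor is at least `n / k`.
With `n = mα`, `p = 1/m` and `k = d + 1` one has `n p / k = α / (d + 1)`.
-/

open Finset Nat

theorem Nat.pow_mul_factorial_le_pow_mul_descFactorial {n k : ℕ} (hk : k ≤ n) :
    n ^ k * k ! ≤ k ^ k * n.descFactorial k := by
  have hpow (a : ℕ) : a ^ k = ∏ _i ∈ range k, a := by simp
  rw [← Nat.descFactorial_self, Nat.descFactorial_eq_prod_range, Nat.descFactorial_eq_prod_range,
    hpow n, hpow k, ← prod_mul_distrib, ← prod_mul_distrib]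
  refine prod_le_prod' fun i hi => ?_
  have hik : i < k := mem_range.mp hi
  have : k * i ≤ n * i := Nat.mul_le_mul_right i hk
  rw [Nat.mul_sub, Nat.mul_sub, Nat.mul_comm n k]
  omega

theorem Nat.pow_le_pow_mul_choose {n k : ℕ} (hk : k ≤ n) : n ^ k ≤ k ^ k * n.choose k := by
  refine Nat.le_of_mul_le_mul_right ?_ k.factorial_pos
  calc n ^ k * k ! ≤ k ^ k * n.descFactorial k := pow_mul_factorial_le_pow_mul_descFactorial hk
    _ = k ^ k * n.choose k * k ! := by rw [Nat.descFactorial_eq_factorial_mul_choose]; ring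

theorem div_pow_le_choose {K : Type*} [Semifield K] [LinearOrder K] [IsStrictOrderedRing K]
    {n k : ℕ} (hk : k ≤ n) : ((n : K) / k) ^ k ≤ n.choose k := by
  rcases k.eq_zero_or_pos with rfl | hk0
  · simp
  rw [div_pow, div_le_iff₀ (by positivity), mul_comm]
  exact_mod_cast Nat.pow_le_pow_mul_choose hk

theorem binomial_upper_tail_ge {n k : ℕ} {p : ℝ} (hp₀ : 0 ≤ p) (hp₁ : p ≤ 1) (hk : k ≤ n) :
    (1 - p) ^ n * (n * p / k) ^ k ≤
      ∑ j ∈ Icc k n, (n.choose j : ℝ) * p ^ j * (1 - p) ^ (n - j) := by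
  have hq₀ : 0 ≤ 1 - p := sub_nonneg.mpr hp₁
  calc (1 - p) ^ n * (n * p / k) ^ k = (1 - p) ^ n * (((n : ℝ) / k) ^ k * p ^ k) := by
        rw [mul_div_right_comm, mul_pow]
    _ ≤ (1 - p) ^ (n - k) * ((n.choose k : ℝ) * p ^ k) := by
        gcongr ?_ * (?_ * _)
        · exact pow_le_pow_of_le_one hq₀ (by linarith) (Nat.sub_le n k)
        · exact div_pow_le_choose (K := ℝ) hk
    _ = (n.choose k : ℝ) * p ^ k * (1 - p) ^ (n - k) := mul_comm _ _
    _ ≤ ∑ j ∈ Icc k n, (n.choose j : ℝ) * p ^ j * (1 - p) ^ (n - j) :=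
        single_le_sum (f := fun j => (n.choose j : ℝ) * p ^ j * (1 - p) ^ (n - j))
          (fun j _ => by positivity) (mem_Icc.mpr ⟨le_rfl, hk⟩)

theorem binomial_tail_lower_bound_general (m α d : ℕ)
    (hd : d + 1 ≤ m * α) :
    (∑ k ∈ Finset.Icc (d + 1) (m * α),
        (Nat.choose (m * α) k : ℝ) * (1 / m) ^ k * (1 - 1 / m) ^ (m * α - k))
      ≥ (1 - 1 / (m : ℝ)) ^ (m * α) * ((α : ℝ) / (d + 1)) ^ (d + 1) := by
  have hm : m ≠ 0 := by
    rintro rfl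
    simp at hd
  have hmR : (m : ℝ) ≠ 0 := Nat.cast_ne_zero.mpr hm
  have hp₁ : 1 / (m : ℝ) ≤ 1 :=
    div_le_one_of_le₀ (Nat.one_le_cast.mpr (Nat.one_le_iff_ne_zero.mpr hm)) (Nat.cast_nonneg m)
  have hmean : (α : ℝ) / (d + 1) = ((m * α : ℕ) : ℝ) * (1 / m) / ((d + 1 : ℕ) : ℝ) := by
    push_cast
    field_simp
  rw [hmean]
  exact binomial_upper_tail_ge (by positivity) hp₁ hd

/-- **Binomial tail lower bound** (key estimate in the proof of Theorem 4.3): for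
`n = m·α` with `m ≥ 2`, `α ≥ 1` and `d + 1 ≤ n`, the upper tail `P(T > d)` of a
`Binomial(n, 1/m)` variable `T` is at least `(1 − 1/m)^n · (α/(d+1))^(d+1)`. -/
theorem binomial_tail_lower_bound (m α d : ℕ) (hm : 2 ≤ m) (hα : 1 ≤ α)
    (hd : d + 1 ≤ m * α) :
    (∑ k ∈ Finset.Icc (d + 1) (m * α),
        (Nat.choose (m * α) k : ℝ) * (1 / m) ^ k * (1 - 1 / m) ^ (m * α - k))
      ≥ (1 - 1 / (m : ℝ)) ^ (m * α) * ((α : ℝ) / (d + 1)) ^ (d + 1) :=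
  binomial_tail_lower_bound_general m α d hd
end

section
/- Upper bound on the non-excess probability (non-asymptotic core of Theorem 4.3): let n = m·α with m ≥ 2 and α ≥ 1 naturals, and let d be a natural number with α ≤ d and d + 1 ≤ n. Then |{f : Fin n → Fin m ; ∀ k ∈ Fin m, |f⁻¹(k)| ≤ d}| ≤ m^n · exp( − m · (1 − 1/m)^n · (α/(d+1))^{d+1} ); that is, the probability that a uniformly random function from Fin n to Fin m has all fibers of size at most d is at most exp(−m·(1−1/m)^n·(α/(d+1))^{d+1}). -/
/-!
Negative correlation of the fibre sizes. Condition on the fibre `T` of one value `k`: the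
conditional probability that the fibres over a set `S ∌ k` of other values all stay small
only increases with `#T` (putting a point into the fibre over `k` cannot enlarge any other
fibre), whereas the event `#T ≤ d` is decreasing in `#T`. Chebyshev's sum inequality then gives
`P(all fibres ≤ d) ≤ ∏ⱼ P(#f⁻¹(j) ≤ d)`. Each factor is at most `1 - q` with
`q = P(#f⁻¹(j) = d + 1) = C(n, d+1) (m-1)^(n-d-1) / m^n ≥ (1 - 1/m)^n (α/(d+1))^(d+1)`,
by `n^k ≤ C(n, k) k^k` and `(m - 1) α ≤ n`, and finally `(1 - q)^m ≤ exp(-m q)`.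
-/

open Finset
open scoped Nat

theorem Nat.pow_le_choose_mul_pow {n k : ℕ} (hk : k ≤ n) : n ^ k ≤ n.choose k * k ^ k := by
  refine Nat.le_of_mul_le_mul_right ?_ (factorial_pos k)
  calc n ^ k * k ! = ∏ i ∈ range k, n * (k - i) := by
        rw [prod_mul_distrib, prod_const, card_range, ← descFactorial_self,
          descFactorial_eq_prod_range]
    _ ≤ ∏ i ∈ range k, k * (n - i) := by
        refine prod_le_prod' fun i _ => ?_
        rw [Nat.mul_sub, Nat.mul_sub, Nat.mul_comm n k]
        exact Nat.sub_le_sub_left (Nat.mul_le_mul_right i hk) _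
    _ = n.choose k * k ^ k * k ! := by
        rw [prod_mul_distrib, prod_const, card_range, ← descFactorial_eq_prod_range,
          descFactorial_eq_factorial_mul_choose]
        ring

-- The right-hand side is `P(Bin(n, 1/m) = k)`.
theorem one_sub_one_div_pow_mul_le_choose_mul_div {m n a k : ℕ} (hm : 1 ≤ m) (hkn : k ≤ n)
    (ha : (m - 1) * a ≤ n) :
    (1 - 1 / (m : ℝ)) ^ n * ((a : ℝ) / k) ^ k ≤
      (n.choose k * (m - 1) ^ (n - k) : ℕ) / (m : ℝ) ^ n := by
  have hnat : (m - 1) ^ n * a ^ k ≤ n.choose k * (m - 1) ^ (n - k) * k ^ k :=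
    calc (m - 1) ^ n * a ^ k = (m - 1) ^ (n - k) * ((m - 1) * a) ^ k := by
          rw [mul_pow, ← mul_assoc, ← pow_add, Nat.sub_add_cancel hkn]
      _ ≤ (m - 1) ^ (n - k) * (n.choose k * k ^ k) :=
          Nat.mul_le_mul_left _
            ((Nat.pow_le_pow_left ha k).trans (Nat.pow_le_choose_mul_pow hkn))
      _ = n.choose k * (m - 1) ^ (n - k) * k ^ k := by ring
  have hkk : (0 : ℝ) < (k ^ k : ℕ) := mod_cast Nat.pow_self_pos
  calc (1 - 1 / (m : ℝ)) ^ n * ((a : ℝ) / k) ^ k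
      = ((m - 1) ^ n * a ^ k : ℕ) / ((k ^ k : ℕ) * (m : ℝ) ^ n) := by
        push_cast [Nat.cast_sub hm]
        rw [one_sub_div (by positivity), div_pow, div_pow, div_mul_div_comm,
          mul_comm ((k : ℝ) ^ k)]
    _ ≤ (n.choose k * (m - 1) ^ (n - k) * k ^ k : ℕ) / ((k ^ k : ℕ) * (m : ℝ) ^ n) := by
        gcongr
    _ = (n.choose k * (m - 1) ^ (n - k) : ℕ) / (m : ℝ) ^ n := by
        rw [Nat.cast_mul _ (k ^ k), mul_comm ((k ^ k : ℕ) : ℝ), mul_div_mul_right _ _ hkk.ne']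

-- Chebyshev's sum inequality, in the symmetrised form in which it is checked pairwise.
theorem sum_mul_sum_le_of_pairwise_le {ι : Type*} (s : Finset ι) (a b c e : ι → ℕ)
    (h : ∀ i ∈ s, ∀ j ∈ s, a i * b j + a j * b i ≤ c i * e j + c j * e i) :
    (∑ i ∈ s, a i) * ∑ i ∈ s, b i ≤ (∑ i ∈ s, c i) * ∑ i ∈ s, e i := by
  have hsymm (p q : ι → ℕ) : ∑ i ∈ s, ∑ j ∈ s, (p i * q j + p j * q i) =
      2 * ((∑ i ∈ s, p i) * ∑ i ∈ s, q i) := by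
    rw [sum_mul_sum, two_mul]
    simp only [sum_add_distrib]
    rw [sum_comm (f := fun i j => p j * q i)]
  have hpairs := sum_le_sum fun i hi => sum_le_sum fun j hj => h i hi j hj
  rw [hsymm, hsymm] at hpairs
  omega

theorem card_filter_comp_perm {ι κ : Type*} [Fintype ι] [DecidableEq κ] (σ : Equiv.Perm ι)
    (f : ι → κ) (j : κ) : #{x | f (σ x) = j} = #{x | f x = j} :=
  card_equiv σ fun x => by simp

section

variable {ι κ : Type*} [Fintype ι] [DecidableEq ι] [Fintype κ] [DecidableEq κ]

variable (ι) in
def boundedFibers (d : ℕ) (S : Finset κ) : Finset (ι → κ) :=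
  {f | ∀ j ∈ S, #{x | f x = j} ≤ d}

def boundedFibersWith (d : ℕ) (S : Finset κ) (k : κ) (T : Finset ι) : Finset (ι → κ) :=
  {f ∈ boundedFibers ι d S | ({x | f x = k} : Finset ι) = T}

variable {d : ℕ}

theorem card_filter_fiber_eq_s9 (k : κ) (T : Finset ι) :
    #{f : ι → κ | ({x | f x = k} : Finset ι) = T} =
      (Fintype.card κ - 1) ^ (Fintype.card ι - #T) := by
  have hpi : ({f : ι → κ | ({x | f x = k} : Finset ι) = T} : Finset _) =
      Fintype.piFinset fun x => if x ∈ T then {k} else univ.erase k := by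
    ext f
    simp only [mem_filter, mem_univ, true_and, Fintype.mem_piFinset, Finset.ext_iff]
    refine forall_congr' fun x => ?_
    split_ifs with hx <;> simp [hx]
  rw [hpi, Fintype.card_piFinset]
  simp [apply_ite card, prod_ite, card_erase_of_mem, filter_notMem_eq_sdiff, card_univ_sdiff]

theorem boundedFibers_empty : boundedFibers ι d (∅ : Finset κ) = univ := by
  simp [boundedFibers]

theorem card_boundedFibers_eq_sum (S : Finset κ) (k : κ) :
    #(boundedFibers ι d S) = ∑ T : Finset ι, #(boundedFibersWith d S k T) :=
  card_eq_sum_card_fiberwise fun _ _ => mem_univ _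

theorem card_boundedFibers_insert_eq_sum (S : Finset κ) (k : κ) :
    #(boundedFibers ι d (insert k S)) =
      ∑ T : Finset ι, if #T ≤ d then #(boundedFibersWith d S k T) else 0 := by
  rw [card_eq_sum_card_fiberwise (f := fun f : ι → κ => ({x | f x = k} : Finset ι)) (t := univ)
    fun _ _ => mem_univ _]
  refine sum_congr rfl fun T _ => ?_
  split_ifs with hT
  · congr 1
    ext f
    simp only [boundedFibersWith, boundedFibers, mem_filter, mem_univ, true_and, forall_mem_insert]
    constructor
    · rintro ⟨⟨-, hS⟩, hf⟩
      exact ⟨hS, hf⟩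
    · rintro ⟨hS, hf⟩
      exact ⟨⟨hf ▸ hT, hS⟩, hf⟩
  · rw [card_eq_zero, filter_eq_empty_iff]
    intro f hf hfT
    simp only [boundedFibers, mem_filter, forall_mem_insert] at hf
    exact hT (hfT ▸ hf.2.1)

theorem card_boundedFibersWith_empty (k : κ) (T : Finset ι) :
    #(boundedFibersWith d ∅ k T) = (Fintype.card κ - 1) ^ (Fintype.card ι - #T) := by
  rw [← card_filter_fiber_eq_s9, boundedFibersWith, boundedFibers_empty]

theorem card_fun_eq_sum (k : κ) :
    Fintype.card κ ^ Fintype.card ι =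
      ∑ T : Finset ι, (Fintype.card κ - 1) ^ (Fintype.card ι - #T) := by
  rw [← Fintype.card_fun, ← card_univ, ← boundedFibers_empty (d := 0),
    card_boundedFibers_eq_sum ∅ k]
  simp only [card_boundedFibersWith_empty]

theorem card_boundedFibers_singleton_eq_sum (k : κ) :
    #(boundedFibers ι d {k}) =
      ∑ T : Finset ι,
        if #T ≤ d then (Fintype.card κ - 1) ^ (Fintype.card ι - #T) else 0 := by
  simp only [← insert_empty_eq, card_boundedFibers_insert_eq_sum, card_boundedFibersWith_empty]

variable {S : Finset κ} {k : κ}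

theorem card_boundedFibersWith_congr {T₁ T₂ : Finset ι} (h : #T₁ = #T₂) :
    #(boundedFibersWith d S k T₁) = #(boundedFibersWith d S k T₂) := by
  set σ : Equiv.Perm ι := (equivOfCardEq h).extendSubtype
  have hσ : ∀ x, σ x ∈ T₂ ↔ x ∈ T₁ := fun x => by
    by_cases hx : x ∈ T₁
    · exact iff_of_true ((equivOfCardEq h).extendSubtype_mem x hx) hx
    · exact iff_of_false ((equivOfCardEq h).extendSubtype_not_mem x hx) hx
  refine card_equiv (σ.arrowCongr (Equiv.refl κ)) fun f => ?_
  simp only [boundedFibersWith, boundedFibers, mem_filter, mem_univ, true_and,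
    Equiv.arrowCongr_apply, Equiv.coe_refl, Function.comp_apply, id_eq,
    card_filter_comp_perm, Finset.ext_iff]
  refine and_congr Iff.rfl ⟨fun hf y => ?_, fun hf x => ?_⟩
  · rw [hf, ← hσ, Equiv.apply_symm_apply]
  · simpa [hσ] using hf (σ x)

theorem card_boundedFibersWith_le_mul_insert (hk : k ∉ S) {T : Finset ι} {x : ι}
    (hx : x ∉ T) :
    #(boundedFibersWith d S k T) ≤
      (Fintype.card κ - 1) * #(boundedFibersWith d S k (insert x T)) := by
  have hmaps : ∀ f ∈ boundedFibersWith d S k T,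
      (Function.update f x k, f x) ∈ boundedFibersWith d S k (insert x T) ×ˢ univ.erase k := by
    intro f hf
    simp only [boundedFibersWith, boundedFibers, mem_filter, mem_univ, true_and,
      Finset.ext_iff] at hf
    obtain ⟨hS, hT⟩ := hf
    simp only [boundedFibersWith, boundedFibers, mem_product, mem_filter, mem_univ, true_and,
      mem_erase, Finset.ext_iff, mem_insert]
    refine ⟨⟨fun j hj => (card_le_card fun y => ?_).trans (hS j hj), fun y => ?_⟩, ?_,
      trivial⟩
    · rcases eq_or_ne y x with rfl | hy
      · simp [(ne_of_mem_of_not_mem hj hk).symm]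
      · simp [hy]
    · rcases eq_or_ne y x with rfl | hy
      · simp
      · simp [hy, hT]
    · exact fun hfx => hx ((hT x).1 hfx)
  have hinj : Set.InjOn (fun f : ι → κ => (Function.update f x k, f x))
      (boundedFibersWith d S k T) := by
    intro f _ g _ hfg
    simp only [Prod.mk.injEq] at hfg
    funext y
    rcases eq_or_ne y x with rfl | hy
    · exact hfg.2
    · simpa [hy] using congrFun hfg.1 y
  calc #(boundedFibersWith d S k T)
      ≤ #(boundedFibersWith d S k (insert x T) ×ˢ univ.erase k) :=
        card_le_card_of_injOn _ hmaps hinj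
    _ = _ := by rw [card_product, card_erase_of_mem (mem_univ k), card_univ, mul_comm]

theorem card_boundedFibersWith_le_pow_mul_of_subset (hk : k ∉ S) {T U : Finset ι}
    (h : T ⊆ U) :
    #(boundedFibersWith d S k T) ≤
      (Fintype.card κ - 1) ^ #(U \ T) * #(boundedFibersWith d S k U) := by
  suffices ∀ u : Finset ι, Disjoint u T →
      #(boundedFibersWith d S k T) ≤
        (Fintype.card κ - 1) ^ #u * #(boundedFibersWith d S k (u ∪ T)) by
    simpa [sdiff_union_of_subset h] using this (U \ T) sdiff_disjoint
  intro u
  induction u using Finset.induction_on with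
  | empty => simp
  | insert x u hxu ih =>
    intro hdisj
    have hxT : x ∉ T := disjoint_left.1 hdisj (mem_insert_self x u)
    calc #(boundedFibersWith d S k T)
        ≤ (Fintype.card κ - 1) ^ #u * #(boundedFibersWith d S k (u ∪ T)) :=
          ih (disjoint_of_subset_left (subset_insert x u) hdisj)
      _ ≤ (Fintype.card κ - 1) ^ #u *
            ((Fintype.card κ - 1) * #(boundedFibersWith d S k (insert x (u ∪ T)))) :=
          Nat.mul_le_mul_left _ (card_boundedFibersWith_le_mul_insert hk (by simp [hxu, hxT]))
      _ = (Fintype.card κ - 1) ^ #(insert x u) *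
            #(boundedFibersWith d S k (insert x u ∪ T)) := by
          rw [card_insert_of_notMem hxu, pow_succ, insert_union, mul_assoc]

-- `#(boundedFibersWith d S k T) / (card κ - 1) ^ (card ι - #T)` is the conditional probability
-- of small fibres over `S` given the fibre `T` over `k`; it is monotone in `#T`.
theorem card_boundedFibersWith_mul_pow_le (hk : k ∉ S) {T U : Finset ι} (h : #T ≤ #U) :
    #(boundedFibersWith d S k T) * (Fintype.card κ - 1) ^ (Fintype.card ι - #U) ≤
      (Fintype.card κ - 1) ^ (Fintype.card ι - #T) * #(boundedFibersWith d S k U) := by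
  obtain ⟨U', hTU', -, hU'⟩ :=
    exists_subsuperset_card_eq (subset_univ T) h (by simpa using card_le_univ U)
  have hUn : #U ≤ Fintype.card ι := card_le_univ U
  calc #(boundedFibersWith d S k T) * (Fintype.card κ - 1) ^ (Fintype.card ι - #U)
      ≤ (Fintype.card κ - 1) ^ (#U - #T) * #(boundedFibersWith d S k U) *
          (Fintype.card κ - 1) ^ (Fintype.card ι - #U) := by
        gcongr
        simpa [card_sdiff_of_subset hTU', hU', card_boundedFibersWith_congr hU'] using
          card_boundedFibersWith_le_pow_mul_of_subset (d := d) hk hTU'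
    _ = (Fintype.card κ - 1) ^ (Fintype.card ι - #T) * #(boundedFibersWith d S k U) := by
        rw [mul_right_comm, ← pow_add]
        congr 2
        omega

theorem card_boundedFibers_insert_mul_le (hk : k ∉ S) :
    #(boundedFibers ι d (insert k S)) * Fintype.card κ ^ Fintype.card ι ≤
      #(boundedFibers ι d {k}) * #(boundedFibers ι d S) := by
  rw [card_boundedFibers_insert_eq_sum, card_fun_eq_sum k, card_boundedFibers_singleton_eq_sum,
    card_boundedFibers_eq_sum S k]
  refine sum_mul_sum_le_of_pairwise_le _ _ _ _ _ fun T _ U _ => ?_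
  by_cases hT : #T ≤ d <;> by_cases hU : #U ≤ d <;> simp only [hT, hU, if_true, if_false]
  · exact le_of_eq (by ring)
  · simpa using card_boundedFibersWith_mul_pow_le hk (by omega : #T ≤ #U)
  · simpa using card_boundedFibersWith_mul_pow_le hk (by omega : #U ≤ #T)
  · simp

theorem card_boundedFibers_mul_pow_le_prod (S : Finset κ) :
    #(boundedFibers ι d S) * (Fintype.card κ ^ Fintype.card ι) ^ #S ≤
      Fintype.card κ ^ Fintype.card ι * ∏ j ∈ S, #(boundedFibers ι d {j}) := by
  induction S using Finset.induction_on with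
  | empty => simp [boundedFibers_empty]
  | insert k S hk ih =>
    set N := Fintype.card κ ^ Fintype.card ι
    rw [card_insert_of_notMem hk, prod_insert hk, pow_succ]
    calc #(boundedFibers ι d (insert k S)) * (N ^ #S * N)
        = #(boundedFibers ι d (insert k S)) * N * N ^ #S := by ring
      _ ≤ #(boundedFibers ι d {k}) * #(boundedFibers ι d S) * N ^ #S :=
          Nat.mul_le_mul_right _ (card_boundedFibers_insert_mul_le hk)
      _ = #(boundedFibers ι d {k}) * (#(boundedFibers ι d S) * N ^ #S) := by ring
      _ ≤ #(boundedFibers ι d {k}) * (N * ∏ j ∈ S, #(boundedFibers ι d {j})) := by gcongr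
      _ = N * (#(boundedFibers ι d {k}) * ∏ j ∈ S, #(boundedFibers ι d {j})) := by ring

theorem card_boundedFibers_singleton_add_le (j : κ) :
    #(boundedFibers ι d {j}) +
        (Fintype.card ι).choose (d + 1) * (Fintype.card κ - 1) ^ (Fintype.card ι - (d + 1)) ≤
      Fintype.card κ ^ Fintype.card ι := by
  have hexact : ∑ T ∈ powersetCard (d + 1) (univ : Finset ι),
      (Fintype.card κ - 1) ^ (Fintype.card ι - #T) =
      (Fintype.card ι).choose (d + 1) * (Fintype.card κ - 1) ^ (Fintype.card ι - (d + 1)) := by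
    rw [sum_congr rfl fun T hT => by rw [(mem_powersetCard.1 hT).2], sum_const,
      card_powersetCard, card_univ, smul_eq_mul]
  rw [card_fun_eq_sum j, card_boundedFibers_singleton_eq_sum, ← sum_filter, ← hexact,
    ← sum_filter_add_sum_filter_not univ fun T : Finset ι => #T ≤ d]
  gcongr
  intro T hT
  simp only [mem_powersetCard, mem_filter, mem_univ, true_and] at hT ⊢
  omega

theorem card_boundedFibers_univ_le_exp [Nonempty κ] :
    (#(boundedFibers ι d (univ : Finset κ)) : ℝ) ≤
      (Fintype.card κ : ℝ) ^ Fintype.card ι * Real.exp (-(Fintype.card κ : ℝ) *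
        (((Fintype.card ι).choose (d + 1) * (Fintype.card κ - 1) ^ (Fintype.card ι - (d + 1)) :
          ℕ) / (Fintype.card κ : ℝ) ^ Fintype.card ι)) := by
  set N := Fintype.card κ ^ Fintype.card ι
  set c := (Fintype.card ι).choose (d + 1) * (Fintype.card κ - 1) ^ (Fintype.card ι - (d + 1))
  obtain ⟨j⟩ := ‹Nonempty κ›
  have hcN : c ≤ N := le_of_add_le_right (card_boundedFibers_singleton_add_le (d := d) j)
  have hN : (0 : ℝ) < N := by positivity
  have hprod : #(boundedFibers ι d (univ : Finset κ)) * N ^ Fintype.card κ ≤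
      N * (N - c) ^ Fintype.card κ := by
    rw [← card_univ]
    refine (card_boundedFibers_mul_pow_le_prod univ).trans (Nat.mul_le_mul_left _ ?_)
    exact prod_le_pow_card _ _ _ fun j _ =>
      Nat.le_sub_of_add_le (card_boundedFibers_singleton_add_le j)
  calc (#(boundedFibers ι d (univ : Finset κ)) : ℝ)
      ≤ N * (1 - c / N) ^ Fintype.card κ := by
        rw [one_sub_div hN.ne', div_pow, mul_div_assoc', le_div_iff₀ (by positivity),
          ← Nat.cast_sub hcN]
        exact_mod_cast hprod
    _ ≤ N * Real.exp (-(c / N)) ^ Fintype.card κ := by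
        gcongr
        · exact sub_nonneg.2 ((div_le_one hN).2 (mod_cast hcN))
        · exact Real.one_sub_le_exp_neg _
    _ = _ := by
        rw [← Real.exp_nat_mul]
        push_cast [N]
        ring_nf

end

theorem non_excess_probability_upper_bound_general (m α d : ℕ) (hm : 2 ≤ m)
    (hd : d + 1 ≤ m * α) :
    ((Finset.univ.filter fun f : Fin (m * α) → Fin m =>
        ∀ k : Fin m, (Finset.univ.filter fun x => f x = k).card ≤ d).card : ℝ)
      ≤ (m : ℝ) ^ (m * α) *
        Real.exp (-(m : ℝ) * (1 - 1 / m) ^ (m * α) * ((α : ℝ) / (d + 1)) ^ (d + 1)) := by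
  have : NeZero m := ⟨by omega⟩
  have hfilter : (univ.filter fun f : Fin (m * α) → Fin m =>
      ∀ k : Fin m, #(univ.filter fun x => f x = k) ≤ d) =
      boundedFibers (Fin (m * α)) d univ := by
    ext f
    simp [boundedFibers]
  have hexact := one_sub_one_div_pow_mul_le_choose_mul_div (a := α) (by omega : 1 ≤ m) hd
    (Nat.mul_le_mul_right α (Nat.sub_le m 1))
  rw [Nat.cast_add_one] at hexact
  rw [hfilter]
  refine (card_boundedFibers_univ_le_exp (ι := Fin (m * α)) (κ := Fin m)).trans ?_
  simp only [Fintype.card_fin]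
  refine mul_le_mul_of_nonneg_left (Real.exp_le_exp.2 ?_) (by positivity)
  rw [mul_assoc, neg_mul, neg_mul, neg_le_neg_iff]
  exact mul_le_mul_of_nonneg_left hexact (by positivity)

/-- **Upper bound on the non-excess probability** (non-asymptotic core of Theorem 4.3):
for `n = m·α` with `m ≥ 2`, `α ≥ 1`, `α ≤ d` and `d + 1 ≤ n`, the probability that a
uniformly random function `Fin n → Fin m` has all fibers of size at most `d` is at most
`exp(−m · (1 − 1/m)^n · (α/(d+1))^(d+1))`. -/
theorem non_excess_probability_upper_bound (m α d : ℕ) (hm : 2 ≤ m) (hα : 1 ≤ α)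
    (hαd : α ≤ d) (hd : d + 1 ≤ m * α) :
    ((Finset.univ.filter fun f : Fin (m * α) → Fin m =>
        ∀ k : Fin m, (Finset.univ.filter fun x => f x = k).card ≤ d).card : ℝ)
      ≤ (m : ℝ) ^ (m * α) *
        Real.exp (-(m : ℝ) * (1 - 1 / m) ^ (m * α) * ((α : ℝ) / (d + 1)) ^ (d + 1)) :=
  non_excess_probability_upper_bound_general m α d hm hd
end

section
/- Lower bound on the non-excess probability (Lemma 4.8, counting form): let n = m·α with m, α ≥ 1 naturals, and let d be a natural number with α ≤ d ≤ n and d dividing n (so n/d ≤ m). Then |{f : Fin n → Fin m ; ∀ k ∈ Fin m, |f⁻¹(k)| ≤ d}| ≥ m^n · √(2πn) · (2πd)^{−n/(2d)} · (α/d)^n · e^{−n/(12d²)} · (α+1)^{m − n/d}; in the paper's notation with c = d/α this reads P(T_max ≤ d) ≥ (√(2πn)/(2πd)^{m/(2c)}) · c^{−n} · e^{−m/(12cd)} · (α+1)^{m(1−1/c)}, where T_max is the maximum fiber size of a uniformly random function from Fin n to Fin m. -/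
/-!
Choose `r = n/d` of the `m` fibers to be "full" and let each of the other `m - r` fibers
have any size in `{0, …, α}`; since `α (m - r) ≤ n = d r`, the remaining points can be spread
over the `r` full fibers with at most `d` in each. These `(α+1)^(m-r)` fiber-size profiles are
distinct and have all entries `≤ d`, and a profile `t` is realised by `n! / ∏ tₖ!` functions
(orbit–stabilizer for `Perm (Fin n)` acting by precomposition), which is at least `n! / (d!)^r`
because `∏ tₖ!` is maximal when the mass is concentrated in full blocks. Stirling's lower bound
for `n!` and Robbins' upper bound `d! ≤ √(2πd) (d/e)^d e^{1/(12d)}` turn `n! / (d!)^r` into the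
stated expression.
-/

open Finset Real Filter Topology Nat

namespace Stirling

lemma log_stirlingSeq_sub_le {n : ℕ} (hn : n ≠ 0) (k : ℕ) :
    log (stirlingSeq n) - log (stirlingSeq (n + k)) ≤ 1 / (12 * n) := by
  have hstep (j : ℕ) (_ : j ∈ range k) :
      log (stirlingSeq (n + j)) - log (stirlingSeq (n + (j + 1))) ≤
        1 / (12 * ((n + j : ℕ) : ℝ)) - 1 / (12 * ((n + (j + 1) : ℕ) : ℝ)) := by
    have hpos : (0 : ℝ) < n + j := by positivity
    rw [← add_assoc]
    refine (log_stirlingSeq_sdiff_le _).trans (le_of_eq ?_)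
    push_cast
    field_simp
    ring
  have := Finset.sum_le_sum hstep
  rw [Finset.sum_range_sub' (fun j => log (stirlingSeq (n + j))),
    Finset.sum_range_sub' (fun j => 1 / (12 * ((n + j : ℕ) : ℝ)))] at this
  simp only [add_zero] at this
  have : (0 : ℝ) ≤ 1 / (12 * ((n + k : ℕ) : ℝ)) := by positivity
  linarith

lemma stirlingSeq_le_sqrt_pi_mul_exp {n : ℕ} (hn : n ≠ 0) :
    stirlingSeq n ≤ √π * exp (1 / (12 * n)) := by
  have hlim : Tendsto (fun k => log (stirlingSeq (k + n))) atTop (𝓝 (log √π)) :=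
    ((continuousAt_log (by positivity)).tendsto.comp tendsto_stirlingSeq_sqrt_pi).comp
      (tendsto_add_atTop_nat n)
  have hlog : log (stirlingSeq n) ≤ log √π + 1 / (12 * n) :=
    ge_of_tendsto' (hlim.add_const _) fun k => by
      linarith [add_comm n k ▸ log_stirlingSeq_sub_le hn k]
  have hpos : 0 < stirlingSeq n := by
    obtain ⟨p, rfl⟩ := Nat.exists_eq_succ_of_ne_zero hn
    exact stirlingSeq'_pos p
  rwa [← exp_le_exp, exp_log hpos, exp_add, exp_log (by positivity)] at hlog

theorem factorial_le_stirling {n : ℕ} (hn : n ≠ 0) :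
    (n ! : ℝ) ≤ √(2 * π * n) * (n / exp 1) ^ n * exp (1 / (12 * n)) := by
  have h := stirlingSeq_le_sqrt_pi_mul_exp hn
  rw [stirlingSeq, div_le_iff₀ (by positivity)] at h
  refine h.trans (le_of_eq ?_)
  rw [show 2 * π * n = π * (2 * n) by ring, sqrt_mul pi_nonneg]
  ring

end Stirling

theorem Nat.factorial_pow_le_factorial_pow {a b : ℕ} (h : a ≤ b) : a ! ^ b ≤ b ! ^ a := by
  induction b, h using Nat.le_induction with
  | base => exact le_rfl
  | succ b hab ih =>
    calc a ! ^ (b + 1) = a ! ^ b * a ! := pow_succ _ _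
      _ ≤ b ! ^ a * (b + 1) ^ a :=
        Nat.mul_le_mul ih ((factorial_le_pow a).trans (Nat.pow_le_pow_left (by omega) a))
      _ = (b + 1)! ^ a := by rw [factorial_succ, mul_pow, mul_comm]

theorem Finset.prod_factorial_le_factorial_pow {ι : Type*} {s : Finset ι} {t : ι → ℕ} {d r : ℕ}
    (hd : d ≠ 0) (ht : ∀ i ∈ s, t i ≤ d) (hsum : ∑ i ∈ s, t i = d * r) :
    ∏ i ∈ s, (t i)! ≤ d ! ^ r := by
  rw [← Nat.pow_le_pow_iff_left hd]
  calc (∏ i ∈ s, (t i)!) ^ d = ∏ i ∈ s, (t i)! ^ d := (prod_pow _ _ _).symm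
    _ ≤ ∏ i ∈ s, d ! ^ t i := prod_le_prod' fun i hi => factorial_pow_le_factorial_pow (ht i hi)
    _ = (d ! ^ r) ^ d := by rw [prod_pow_eq_pow_sum, hsum, ← pow_mul, mul_comm]

theorem Fin.exists_sum_eq_of_le_mul {R d r : ℕ} (h : R ≤ d * r) :
    ∃ u : Fin r → ℕ, (∀ j, u j ≤ d) ∧ ∑ j, u j = R := by
  induction r generalizing R with
  | zero => exact ⟨Fin.elim0, fun j => j.elim0, by simp_all⟩
  | succ r ih =>
    obtain ⟨u, hud, husum⟩ := ih (R := R - min d R) (by rw [Nat.mul_succ] at h; omega)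
    refine ⟨Fin.cons (min d R) u, Fin.cases (min_le_left _ _) hud, ?_⟩
    rw [Fin.sum_cons, husum]
    omega

def fiberCard {α ι : Type*} [Fintype α] [DecidableEq ι] (f : α → ι) (i : ι) : ℕ :=
  #{x | f x = i}

theorem exists_fiberCard_eq {α ι : Type*} [Fintype α] [Fintype ι] [DecidableEq ι]
    (t : ι → ℕ) (ht : ∑ i, t i = Fintype.card α) : ∃ g : α → ι, fiberCard g = t := by
  let e : α ≃ Σ i, Fin (t i) := Fintype.equivOfCardEq (by simp [ht])
  refine ⟨fun x => (e x).1, funext fun i => ?_⟩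
  rw [fiberCard, ← Fintype.card_subtype, ← Fintype.card_fin (t i)]
  exact Fintype.card_congr ((e.subtypeEquiv fun _ => Iff.rfl).trans (Equiv.sigmaSubtype i))

theorem fiberCard_comp_perm {α ι : Type*} [Fintype α] [DecidableEq ι] (g : α → ι)
    (σ : Equiv.Perm α) : fiberCard (g ∘ σ) = fiberCard g := by
  ext i
  simp only [fiberCard, ← Fintype.card_subtype]
  exact Fintype.card_congr (σ.subtypeEquiv fun _ => Iff.rfl)

theorem factorial_card_le_prod_factorial_mul_card_comp_perm {α ι : Type*} [Fintype α]
    [DecidableEq α] [Fintype ι] [DecidableEq ι] (g : α → ι) :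
    (Fintype.card α)! ≤
      (∏ i, (fiberCard g i)!) * #(univ.image fun σ : Equiv.Perm α => g ∘ σ) := by
  simp only [fiberCard, ← Fintype.card_subtype]
  rw [← Fintype.card_perm, ← DomMulAct.stabilizer_card g, ← Finset.card_univ]
  refine card_le_mul_card_image _ _ fun f hf => ?_
  obtain ⟨σ₀, -, rfl⟩ := mem_image.mp hf
  rw [← Fintype.card_subtype]
  refine Fintype.card_le_of_injective (fun σ => ⟨σ.1 * σ₀⁻¹, ?_⟩) fun σ τ h => ?_
  · ext x
    simpa using congrFun σ.2 (σ₀⁻¹ x)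
  · exact Subtype.ext (mul_right_cancel (congrArg Subtype.val h))

theorem factorial_card_le_prod_factorial_mul_card_fiberCard_eq {α ι : Type*} [Fintype α]
    [DecidableEq α] [Fintype ι] [DecidableEq ι] (t : ι → ℕ) (ht : ∑ i, t i = Fintype.card α) :
    (Fintype.card α)! ≤ (∏ i, (t i)!) * #{f : α → ι | fiberCard f = t} := by
  obtain ⟨g, rfl⟩ := exists_fiberCard_eq t ht
  refine (factorial_card_le_prod_factorial_mul_card_comp_perm g).trans
    (Nat.mul_le_mul_left _ (card_le_card fun f hf => ?_))
  obtain ⟨σ, -, rfl⟩ := mem_image.mp hf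
  simpa using fiberCard_comp_perm g σ

theorem factorial_mul_card_le_factorial_pow_mul_card_fiberCard_le {β ι : Type*} [Fintype β]
    [Fintype ι] [DecidableEq ι] {d r : ℕ} (hd : d ≠ 0) {t : β → ι → ℕ}
    (ht_inj : Function.Injective t) (ht_le : ∀ b i, t b i ≤ d)
    (ht_sum : ∀ b, ∑ i, t b i = d * r) :
    (d * r)! * Fintype.card β ≤ d ! ^ r * #{f : Fin (d * r) → ι | ∀ i, fiberCard f i ≤ d} := by
  set S : β → Finset (Fin (d * r) → ι) := fun b => {f | fiberCard f = t b} with hS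
  have hS_card (b : β) : (d * r)! ≤ d ! ^ r * #(S b) := by
    have := factorial_card_le_prod_factorial_mul_card_fiberCard_eq (α := Fin (d * r)) (t b)
      (by simpa using ht_sum b)
    rw [Fintype.card_fin] at this
    exact this.trans (Nat.mul_le_mul_right _
      (prod_factorial_le_factorial_pow hd (fun i _ => ht_le b i) (ht_sum b)))
  have hS_disj : ((univ : Finset β) : Set β).PairwiseDisjoint S := by
    intro b _ b' _ hbb'
    refine disjoint_left.mpr fun f hfb hfb' => hbb' (ht_inj ?_)
    simp only [hS, mem_filter, mem_univ, true_and] at hfb hfb'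
    exact hfb.symm.trans hfb'
  have hS_sub : univ.biUnion S ⊆ ({f | ∀ i, fiberCard f i ≤ d} : Finset _) := by
    intro f hf
    obtain ⟨b, -, hfb⟩ := mem_biUnion.mp hf
    simp only [hS, mem_filter, mem_univ, true_and] at hfb ⊢
    exact fun i => (congrFun hfb i).trans_le (ht_le b i)
  calc (d * r)! * Fintype.card β = ∑ _b : β, (d * r)! := by simp [mul_comm]
    _ ≤ ∑ b, d ! ^ r * #(S b) := sum_le_sum fun b _ => hS_card b
    _ = d ! ^ r * #(univ.biUnion S) := by rw [← mul_sum, card_biUnion hS_disj]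
    _ ≤ _ := Nat.mul_le_mul_left _ (card_le_card hS_sub)

theorem exists_injective_bounded_profiles {q r m α d : ℕ} (hαd : α ≤ d) (hqr : q + r = m)
    (hαq : α * q ≤ d * r) :
    ∃ t : (Fin q → Fin (α + 1)) → Fin m → ℕ, Function.Injective t ∧ (∀ v k, t v k ≤ d) ∧
      ∀ v, ∑ k, t v k = d * r := by
  subst hqr
  have hv (v : Fin q → Fin (α + 1)) : ∑ i, (v i : ℕ) ≤ d * r :=
    calc ∑ i, (v i : ℕ) ≤ ∑ _i : Fin q, α := sum_le_sum fun i _ => Nat.lt_succ_iff.mp (v i).2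
      _ ≤ d * r := by simpa [mul_comm] using hαq
  choose u hud husum using fun v : Fin q → Fin (α + 1) =>
    Fin.exists_sum_eq_of_le_mul (Nat.sub_le (d * r) (∑ i, (v i : ℕ)))
  refine ⟨fun v => Fin.append (fun i => (v i : ℕ)) (u v), fun v w hvw => ?_, fun v k => ?_,
    fun v => ?_⟩
  · funext i
    exact Fin.ext (by simpa using congrFun hvw (Fin.castAdd r i))
  · refine Fin.addCases (fun i => ?_) (fun j => ?_) k
    · simpa using (Nat.lt_succ_iff.mp (v i).2).trans hαd
    · simpa using hud v j
  · simp only [Fin.sum_univ_add, Fin.append_left, Fin.append_right, husum]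
    have := hv v
    omega

theorem factorial_mul_pow_le_factorial_pow_mul_card_fiber_le {m α d r : ℕ} (hd : d ≠ 0)
    (hαd : α ≤ d) (hrm : r ≤ m) (hrd : d * r = m * α) :
    (m * α)! * (α + 1) ^ (m - r) ≤
      d ! ^ r * #{f : Fin (m * α) → Fin m | ∀ k, #{x | f x = k} ≤ d} := by
  obtain ⟨t, ht_inj, ht_le, ht_sum⟩ := exists_injective_bounded_profiles (q := m - r) hαd
    (Nat.sub_add_cancel hrm) (by rw [hrd, mul_comm]; exact Nat.mul_le_mul_right α (Nat.sub_le m r))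
  have := factorial_mul_card_le_factorial_pow_mul_card_fiberCard_le hd ht_inj ht_le ht_sum
  rw [hrd] at this
  -- the decidability instances of `∀ k : Fin m` and `∀ i : ι` differ
  convert this using 4
  · simp
  · rfl

theorem sqrt_mul_pow_mul_factorial_pow_le {d : ℕ} (hd : d ≠ 0) (r : ℕ) :
    √(2 * π * (d * r : ℕ)) * (r : ℝ) ^ (d * r) * (d ! : ℝ) ^ r ≤
      ((d * r)! : ℝ) * √(2 * π * d) ^ r * exp (r / (12 * d)) := by
  have hexp : exp (1 / (12 * d)) ^ r = exp (r / (12 * d)) := by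
    rw [← exp_nat_mul]
    ring_nf
  calc √(2 * π * (d * r : ℕ)) * (r : ℝ) ^ (d * r) * (d ! : ℝ) ^ r
      ≤ √(2 * π * (d * r : ℕ)) * (r : ℝ) ^ (d * r) *
          (√(2 * π * d) * (d / exp 1) ^ d * exp (1 / (12 * d))) ^ r := by
        gcongr
        exact Stirling.factorial_le_stirling hd
    _ = √(2 * π * (d * r : ℕ)) * (((d * r : ℕ) : ℝ) / exp 1) ^ (d * r) *
          √(2 * π * d) ^ r * exp (r / (12 * d)) := by
        rw [mul_pow, mul_pow, hexp, ← pow_mul]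
        push_cast
        ring
    _ ≤ ((d * r)! : ℝ) * √(2 * π * d) ^ r * exp (r / (12 * d)) := by
        gcongr
        exact Stirling.le_factorial_stirling _

theorem le_factorial_div_factorial_pow {m α d r : ℕ} (hd : d ≠ 0) (hrd : d * r = m * α) :
    (m : ℝ) ^ (m * α) * √(2 * π * (m * α : ℕ)) *
        (2 * π * (d : ℝ)) ^ (-((m * α : ℕ) : ℝ) / (2 * (d : ℝ))) *
        ((α : ℝ) / d) ^ (m * α) * exp (-((m * α : ℕ) : ℝ) / (12 * (d : ℝ) ^ 2)) ≤
      ((m * α)! : ℝ) / (d ! : ℝ) ^ r := by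
  have hd_pos : (0 : ℝ) < d := by positivity
  have hN : ((m * α : ℕ) : ℝ) = d * r := by exact_mod_cast hrd.symm
  have hpow : (m : ℝ) ^ (m * α) * ((α : ℝ) / d) ^ (m * α) = (r : ℝ) ^ (m * α) := by
    rw [← mul_pow, mul_div_assoc', ← Nat.cast_mul, hN, mul_div_cancel_left₀ _ hd_pos.ne']
  have hrpow : (2 * π * (d : ℝ)) ^ (-((m * α : ℕ) : ℝ) / (2 * (d : ℝ))) =
      (√(2 * π * d) ^ r)⁻¹ := by
    rw [hN, show -(d * r : ℝ) / (2 * d) = -((1 / 2 : ℝ) * r) by field_simp,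
      rpow_neg (by positivity), rpow_mul (by positivity), rpow_natCast, ← sqrt_eq_rpow]
  have hexp : exp (-((m * α : ℕ) : ℝ) / (12 * (d : ℝ) ^ 2)) = (exp (r / (12 * d)))⁻¹ := by
    rw [← exp_neg, hN]
    congr 1
    field_simp
  have hstirling := sqrt_mul_pow_mul_factorial_pow_le hd r
  rw [hrd] at hstirling
  rw [hrpow, hexp, le_div_iff₀ (by positivity)]
  calc _ = √(2 * π * (m * α : ℕ)) * (r : ℝ) ^ (m * α) * (d ! : ℝ) ^ r /
        (√(2 * π * d) ^ r * exp (r / (12 * d))) := by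
        rw [← hpow]
        ring
    _ ≤ _ := by
      rw [div_le_iff₀ (by positivity), ← mul_assoc]
      exact hstirling

theorem non_excess_probability_lower_bound_general (m α d : ℕ) (hα : 1 ≤ α)
    (hαd : α ≤ d) (hdvd : d ∣ m * α) :
    (m : ℝ) ^ (m * α) * Real.sqrt (2 * π * (m * α : ℕ)) *
        (2 * π * (d : ℝ)) ^ (-((m * α : ℕ) : ℝ) / (2 * (d : ℝ))) *
        ((α : ℝ) / d) ^ (m * α) * Real.exp (-((m * α : ℕ) : ℝ) / (12 * (d : ℝ) ^ 2)) *
        ((α : ℝ) + 1) ^ (m - m * α / d)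
      ≤ ((Finset.univ.filter fun f : Fin (m * α) → Fin m =>
          ∀ k : Fin m, (Finset.univ.filter fun x => f x = k).card ≤ d).card : ℝ) := by
  have hd : d ≠ 0 := by omega
  set r := m * α / d
  have hrd : d * r = m * α := Nat.mul_div_cancel' hdvd
  have hrm : r ≤ m := Nat.div_le_of_le_mul (by rw [mul_comm d]; exact Nat.mul_le_mul_left m hαd)
  have hcount : ((m * α)! : ℝ) * ((α : ℝ) + 1) ^ (m - r) ≤
      (d ! : ℝ) ^ r * (#{f : Fin (m * α) → Fin m | ∀ k, #{x | f x = k} ≤ d} : ℕ) := by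
    exact_mod_cast factorial_mul_pow_le_factorial_pow_mul_card_fiber_le hd hαd hrm hrd
  calc _ ≤ ((m * α)! : ℝ) / (d ! : ℝ) ^ r * ((α : ℝ) + 1) ^ (m - r) := by
        gcongr
        exact le_factorial_div_factorial_pow hd hrd
    _ ≤ _ := by
      rw [div_mul_eq_mul_div, div_le_iff₀ (by positivity), mul_comm _ ((d ! : ℝ) ^ r)]
      exact hcount

/-- **Lower bound on the non-excess probability** (Lemma 4.8, counting form): for
`n = m·α` with `α ≤ d ≤ n` and `d ∣ n`, the number of functions `Fin n → Fin m` whose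
fibers all have size at most `d` is at least
`m^n · √(2πn) · (2πd)^(−n/(2d)) · (α/d)^n · e^(−n/(12d²)) · (α+1)^(m − n/d)`. -/
theorem non_excess_probability_lower_bound (m α d : ℕ) (hm : 1 ≤ m) (hα : 1 ≤ α)
    (hαd : α ≤ d) (hdn : d ≤ m * α) (hdvd : d ∣ m * α) :
    (m : ℝ) ^ (m * α) * Real.sqrt (2 * π * (m * α : ℕ)) *
        (2 * π * (d : ℝ)) ^ (-((m * α : ℕ) : ℝ) / (2 * (d : ℝ))) *
        ((α : ℝ) / d) ^ (m * α) * Real.exp (-((m * α : ℕ) : ℝ) / (12 * (d : ℝ) ^ 2)) *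
        ((α : ℝ) + 1) ^ (m - m * α / d)
      ≤ ((Finset.univ.filter fun f : Fin (m * α) → Fin m =>
          ∀ k : Fin m, (Finset.univ.filter fun x => f x = k).card ≤ d).card : ℝ) :=
  non_excess_probability_lower_bound_general m α d hα hαd hdvd
end

section
/- Yao bound (Theorem 5.2, concrete form): for every real t > 1 there exists a family H of hash functions with |H| ≤ ⌊ ln(C(u,n)) / ln(t) ⌋ + 1 such that for every n-element finset S of Fin u there is some h ∈ H with cost(h,S) < t · μ_S, where μ_S := (Σ over all m^u functions g : Fin u → Fin m of cost(g,S)) / m^u is the expected maximum cell load of S under a uniformly random hash function, and C(u,n) is the binomial coefficient 'u choose n'. -/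
open Finset

open scoped Classical

lemma one_le_cost {u m : ℕ} (g : Fin u → Fin m) {S : Finset (Fin u)} (hS : S.Nonempty) :
    1 ≤ cost g S := by
  obtain ⟨x, hx⟩ := hS
  have h1 : 1 ≤ (S.filter fun y => g y = g x).card :=
    Finset.card_pos.mpr ⟨x, Finset.mem_filter.mpr ⟨hx, rfl⟩⟩
  exact h1.trans (Finset.le_sup (f := fun k : Fin m => (S.filter fun x => g x = k).card) (Finset.mem_univ (g x)))

lemma markov {u m : ℕ} (hm : 0 < m) {t : ℝ} (ht : 1 < t) {S : Finset (Fin u)}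
    (hS : S.Nonempty) :
    ((Finset.univ.filter fun g : Fin u → Fin m =>
        ¬ ((cost g S : ℝ) < t * ((∑ g : Fin u → Fin m, (cost g S : ℝ)) / (m : ℝ) ^ u))).card : ℝ)
      ≤ (m : ℝ) ^ u / t := by
  have ht0 : (0:ℝ) < t := lt_trans one_pos ht
  have hmpow : (0:ℝ) < (m:ℝ) ^ u := pow_pos (by exact_mod_cast hm) u
  set μ : ℝ := (∑ g : Fin u → Fin m, (cost g S : ℝ)) / (m : ℝ) ^ u with hμ
  have hsum : ((m:ℝ)^u) ≤ ∑ g : Fin u → Fin m, (cost g S : ℝ) := by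
    calc ((m:ℝ)^u) = ∑ _g : Fin u → Fin m, (1:ℝ) := by
          rw [Finset.sum_const, Finset.card_univ, Fintype.card_fun]
          simp [Fintype.card_fin]
      _ ≤ ∑ g : Fin u → Fin m, (cost g S : ℝ) := by
          apply Finset.sum_le_sum
          intro g _
          exact_mod_cast one_le_cost g hS
  have hμ1 : (1:ℝ) ≤ μ := by
    rw [hμ, le_div_iff₀ hmpow, one_mul]; exact hsum
  have hμ0 : 0 < μ := lt_of_lt_of_le one_pos hμ1
  set B := Finset.univ.filter fun g : Fin u → Fin m => ¬ ((cost g S : ℝ) < t * μ) with hB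
  have hBsum : (B.card : ℝ) * (t * μ) ≤ ∑ g : Fin u → Fin m, (cost g S : ℝ) := by
    calc (B.card : ℝ) * (t * μ) = ∑ _g ∈ B, t * μ := by rw [Finset.sum_const, nsmul_eq_mul]
      _ ≤ ∑ g ∈ B, (cost g S : ℝ) := by
          apply Finset.sum_le_sum
          intro g hg
          exact le_of_not_gt (Finset.mem_filter.mp hg).2
      _ ≤ ∑ g : Fin u → Fin m, (cost g S : ℝ) := by
          apply Finset.sum_le_sum_of_subset_of_nonneg (Finset.filter_subset _ _)
          intro g _ _; positivity
  have key : (B.card : ℝ) * t ≤ (m:ℝ)^u := by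
    have h2 : (B.card : ℝ) * t * μ ≤ (m:ℝ)^u * μ := by
      have : (m:ℝ)^u * μ = ∑ g : Fin u → Fin m, (cost g S : ℝ) := by
        rw [hμ]; field_simp
      rw [mul_assoc, this]; exact hBsum
    exact le_of_mul_le_mul_right h2 hμ0
  rw [le_div_iff₀ ht0]; exact key

lemma greedy {u m : ℕ} (hm : 0 < m) {t : ℝ} (ht : 1 < t)
    (R : Finset (Finset (Fin u))) (hR : ∀ S ∈ R, S.Nonempty) :
    ∃ g : Fin u → Fin m,
      (((R.filter fun S => ¬ ((cost g S : ℝ) < t * ((∑ g : Fin u → Fin m, (cost g S : ℝ)) / (m : ℝ) ^ u))).card : ℝ))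
        ≤ (R.card : ℝ) / t := by
  have ht0 : (0:ℝ) < t := lt_trans one_pos ht
  have hmpow : (0:ℝ) < (m:ℝ) ^ u := pow_pos (by exact_mod_cast hm) u
  haveI : Nonempty (Fin m) := ⟨⟨0, hm⟩⟩
  have hcard : ((Finset.univ : Finset (Fin u → Fin m)).card : ℝ) = (m:ℝ)^u := by
    rw [Finset.card_univ, Fintype.card_fun]; simp [Fintype.card_fin]
  have hswap : ∑ g : Fin u → Fin m,
      (((R.filter fun S => ¬ ((cost g S : ℝ) < t * ((∑ g' : Fin u → Fin m, (cost g' S : ℝ)) / (m : ℝ) ^ u))).card : ℝ))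
      ≤ ∑ _g : Fin u → Fin m, (R.card : ℝ) / t := by
    have h1 : ∀ g : Fin u → Fin m,
        ((R.filter fun S => ¬ ((cost g S : ℝ) < t * ((∑ g' : Fin u → Fin m, (cost g' S : ℝ)) / (m : ℝ) ^ u))).card : ℝ)
        = ∑ S ∈ R, if ¬ ((cost g S : ℝ) < t * ((∑ g' : Fin u → Fin m, (cost g' S : ℝ)) / (m : ℝ) ^ u)) then (1:ℝ) else 0 := by
      intro g
      rw [Finset.card_filter]
      push_cast
      rfl
    calc ∑ g : Fin u → Fin m, (((R.filter fun S => ¬ ((cost g S : ℝ) < t * ((∑ g' : Fin u → Fin m, (cost g' S : ℝ)) / (m : ℝ) ^ u))).card : ℝ))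
        = ∑ S ∈ R, ∑ g : Fin u → Fin m, (if ¬ ((cost g S : ℝ) < t * ((∑ g' : Fin u → Fin m, (cost g' S : ℝ)) / (m : ℝ) ^ u)) then (1:ℝ) else 0) := by
          simp_rw [h1]; exact Finset.sum_comm
      _ ≤ ∑ _S ∈ R, (m:ℝ)^u / t := by
          apply Finset.sum_le_sum
          intro S hS
          have := markov hm ht (hR S hS) (u := u)
          calc ∑ g : Fin u → Fin m, (if ¬ ((cost g S : ℝ) < t * ((∑ g' : Fin u → Fin m, (cost g' S : ℝ)) / (m : ℝ) ^ u)) then (1:ℝ) else 0)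
              = ((Finset.univ.filter fun g : Fin u → Fin m => ¬ ((cost g S : ℝ) < t * ((∑ g' : Fin u → Fin m, (cost g' S : ℝ)) / (m : ℝ) ^ u))).card : ℝ) := by
                rw [Finset.card_filter]; push_cast; rfl
            _ ≤ (m:ℝ)^u / t := this
      _ = ∑ _g : Fin u → Fin m, (R.card : ℝ) / t := by
          rw [Finset.sum_const, Finset.sum_const, Finset.card_univ, Fintype.card_fun]
          simp [Fintype.card_fin]
          ring
  obtain ⟨g, _, hg⟩ := Finset.exists_le_of_sum_le (Finset.univ_nonempty) hswap
  exact ⟨g, hg⟩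


/-- **Yao bound** (Theorem 5.2, concrete form): for every real `t > 1` there is a family
`H` of at most `⌊ln C(u,n)/ln t⌋ + 1` hash functions such that every `n`-element key set
`S` is hashed by some member of `H` with maximum cell load strictly below `t · μ_S`,
where `μ_S` is the expected maximum cell load of `S` under a uniformly random hash
function. -/
theorem yao_bound (u m n : ℕ) (hu : 0 < u) (hm : 0 < m) (hn : 0 < n)
    (hmn : m ≤ n) (hnu : n ^ 2 ≤ u) (t : ℝ) (ht : 1 < t) :
    ∃ H : Finset (Fin u → Fin m),
      H.card ≤ ⌊Real.log (Nat.choose u n : ℝ) / Real.log t⌋₊ + 1 ∧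
      ∀ S : Finset (Fin u), S.card = n → ∃ h ∈ H,
        (cost h S : ℝ) < t * ((∑ g : Fin u → Fin m, (cost g S : ℝ)) / (m : ℝ) ^ u) := by
  classical
  have ht0 : (0:ℝ) < t := lt_trans one_pos ht
  have hnu' : n ≤ u := le_trans (Nat.le_self_pow two_ne_zero n) hnu
  have hC1 : 1 ≤ Nat.choose u n := Nat.choose_pos hnu'
  -- pick function
  have hpick : ∀ R : Finset (Finset (Fin u)), ∃ g : Fin u → Fin m,
      (∀ S ∈ R, S.Nonempty) →
      (((R.filter fun S => ¬ ((cost g S : ℝ) < t * ((∑ g' : Fin u → Fin m, (cost g' S : ℝ)) / (m : ℝ) ^ u))).card : ℝ))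
        ≤ (R.card : ℝ) / t := by
    intro R
    by_cases h : ∀ S ∈ R, S.Nonempty
    · exact (greedy hm ht R h).imp fun g hg => fun _ => hg
    · exact ⟨fun _ => ⟨0, hm⟩, fun h' => absurd h' h⟩
  choose pickF hpickF using hpick
  -- the greedy sequence of remaining sets
  set rem : ℕ → Finset (Finset (Fin u)) := fun k =>
    Nat.rec (Finset.powersetCard n Finset.univ)
      (fun _ R => R.filter fun S =>
        ¬ ((cost (pickF R) S : ℝ) < t * ((∑ g' : Fin u → Fin m, (cost g' S : ℝ)) / (m : ℝ) ^ u))) k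
    with hrem
  have rem_succ : ∀ k, rem (k+1) = (rem k).filter (fun S =>
      ¬ ((cost (pickF (rem k)) S : ℝ) < t * ((∑ g' : Fin u → Fin m, (cost g' S : ℝ)) / (m : ℝ) ^ u))) :=
    fun k => rfl
  have hcardn : ∀ k, ∀ S ∈ rem k, S.card = n := by
    intro k
    induction k with
    | zero => intro S hS; exact (Finset.mem_powersetCard_univ.mp hS)
    | succ k ih => intro S hS; exact ih S (Finset.mem_filter.mp hS).1
  have hne : ∀ k, ∀ S ∈ rem k, S.Nonempty :=
    fun k S hS => Finset.card_pos.mp (by rw [hcardn k S hS]; exact hn)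
  have hbound : ∀ k, ((rem k).card : ℝ) ≤ (Nat.choose u n : ℝ) / t ^ k := by
    intro k
    induction k with
    | zero =>
      simp only [pow_zero, div_one]
      have : (rem 0).card = Nat.choose u n := by
        rw [hrem]
        simp [Finset.card_powersetCard, Finset.card_univ, Fintype.card_fin]
      rw [this]
    | succ k ih =>
      have h1 : ((rem (k+1)).card : ℝ) ≤ ((rem k).card : ℝ) / t := by
        rw [rem_succ k]; exact hpickF (rem k) (hne k)
      calc ((rem (k+1)).card : ℝ) ≤ ((rem k).card : ℝ) / t := h1
        _ ≤ ((Nat.choose u n : ℝ) / t ^ k) / t := by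
            apply div_le_div_of_nonneg_right ih ht0.le
        _ = (Nat.choose u n : ℝ) / t ^ (k+1) := by
            rw [div_div, pow_succ]
  set K := ⌊Real.log (Nat.choose u n : ℝ) / Real.log t⌋₊ + 1 with hK
  have hCpos : (0:ℝ) < (Nat.choose u n : ℝ) := by exact_mod_cast hC1
  have htK : (Nat.choose u n : ℝ) < t ^ K := by
    have hlt : Real.log (Nat.choose u n : ℝ) / Real.log t < (K : ℝ) := by
      rw [hK]; push_cast; exact Nat.lt_floor_add_one _
    have hlogt : 0 < Real.log t := Real.log_pos ht
    have h2 : Real.log (Nat.choose u n : ℝ) < (K : ℝ) * Real.log t :=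
      (div_lt_iff₀ hlogt).mp hlt
    have h3 : Real.log (Nat.choose u n : ℝ) < Real.log (t ^ K) := by
      rw [Real.log_pow]; exact h2
    exact (Real.log_lt_log_iff hCpos (pow_pos ht0 K)).mp h3
  have hKempty : rem K = ∅ := by
    apply Finset.card_eq_zero.mp
    have h1 : ((rem K).card : ℝ) < 1 := by
      calc ((rem K).card : ℝ) ≤ (Nat.choose u n : ℝ) / t ^ K := hbound K
        _ < 1 := (div_lt_one (pow_pos ht0 K)).mpr htK
    exact_mod_cast Nat.lt_one_iff.mp (by exact_mod_cast h1)
  refine ⟨(Finset.range K).image (fun k => pickF (rem k)), ?_, ?_⟩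
  · calc ((Finset.range K).image (fun k => pickF (rem k))).card
        ≤ (Finset.range K).card := Finset.card_image_le
      _ = K := Finset.card_range K
  · intro S hS
    have h0 : S ∈ rem 0 := Finset.mem_powersetCard_univ.mpr hS
    have hex : ∃ j, S ∉ rem j := ⟨K, by rw [hKempty]; exact Finset.notMem_empty S⟩
    set k := Nat.find hex with hkdef
    have hkK : k ≤ K := Nat.find_le (by rw [hKempty]; exact Finset.notMem_empty S)
    have hk0 : k ≠ 0 := by
      intro h
      exact (Nat.find_spec hex) (by rw [← hkdef, h]; exact h0)
    obtain ⟨j, hj⟩ := Nat.exists_eq_succ_of_ne_zero hk0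
    have hSj : S ∈ rem j := not_not.mp (Nat.find_min hex (by omega))
    have hSj1 : S ∉ rem (j+1) := by
      have := Nat.find_spec hex
      rw [← hkdef, hj] at this
      exact this
    have hcov : (cost (pickF (rem j)) S : ℝ) < t * ((∑ g' : Fin u → Fin m, (cost g' S : ℝ)) / (m : ℝ) ^ u) := by
      by_contra hc
      exact hSj1 (by rw [rem_succ j]; exact Finset.mem_filter.mpr ⟨hSj, hc⟩)
    refine ⟨pickF (rem j), ?_, hcov⟩
    exact Finset.mem_image.mpr ⟨j, Finset.mem_range.mpr (by omega), rfl⟩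
end

section
/- Probabilistic existence of small c-ideal families (key step in the proof of Lemma 3.4): set p := M_c / C(u,n), where C(u,n) is the binomial coefficient 'u choose n', and assume 0 < p < 1. Then for every natural number N with N > ln(C(u,n)) / (−ln(1−p)) there exists a c-ideal family of hash functions of cardinality at most N. -/
/-
Fix a hash function `h₀` attaining `M_c`. Composing `h₀` with a uniformly random permutation
of the universe sends each `n`-set to a uniformly random `n`-set, so for every collection `T` of
`n`-sets some `h₀ ∘ σ` is ideal for at least a fraction `p` of `T`. Choosing such hash functions
greedily, at most `C(u,n) (1 - p)^k` sets remain uncovered after `k` steps, and the bound on `N`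
makes this number smaller than `1`.
-/

open Finset

section DoubleCounting

variable {G β : Type*} [Group G] [Fintype G] [MulAction G β] [DecidableEq β]
  {X : Finset β}

lemma card_filter_smul_eq_eq (htrans : ∀ x ∈ X, ∀ y ∈ X, ∃ g : G, g • x = y)
    (x : β) {y z : β} (hy : y ∈ X) (hz : z ∈ X) :
    #{g : G | g • x = y} = #{g : G | g • x = z} := by
  obtain ⟨g₀, rfl⟩ := htrans y hy z hz
  exact card_equiv (Equiv.mulLeft g₀) fun g => by simp [mul_smul]

lemma card_filter_smul_eq_mul_card (hinv : ∀ g : G, ∀ x ∈ X, g • x ∈ X)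
    (htrans : ∀ x ∈ X, ∀ y ∈ X, ∃ g : G, g • x = y) {x y : β} (hx : x ∈ X) (hy : y ∈ X) :
    #{g : G | g • x = y} * #X = Fintype.card G := by
  rw [← card_univ,
    card_eq_sum_card_fiberwise (s := univ) (f := (· • x)) (t := X) fun g _ => hinv g x hx,
    sum_congr rfl fun z hz => card_filter_smul_eq_eq htrans x hz hy, sum_const,
    smul_eq_mul, mul_comm]

lemma card_filter_smul_mem_mul_card (hinv : ∀ g : G, ∀ x ∈ X, g • x ∈ X)
    (htrans : ∀ x ∈ X, ∀ y ∈ X, ∃ g : G, g • x = y) {x : β} (hx : x ∈ X) {B : Finset β}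
    (hB : B ⊆ X) : #{g : G | g • x ∈ B} * #X = #B * Fintype.card G := by
  rw [card_eq_sum_card_fiberwise (s := {g : G | g • x ∈ B}) (f := (· • x)) (t := B)
      fun g hg => (mem_filter.1 hg).2,
    sum_mul, ← smul_eq_mul, ← sum_const]
  refine sum_congr rfl fun y hy => ?_
  rw [filter_filter, ← card_filter_smul_eq_mul_card hinv htrans hx (hB hy)]
  congr 2
  ext g
  simp only [mem_filter, mem_univ, true_and, and_iff_right_iff_imp]
  rintro rfl
  exact hy

theorem exists_card_mul_card_le_card_filter_smul_mem_mul_card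
    (hinv : ∀ g : G, ∀ x ∈ X, g • x ∈ X) (htrans : ∀ x ∈ X, ∀ y ∈ X, ∃ g : G, g • x = y)
    {A B : Finset β} (hA : A ⊆ X) (hB : B ⊆ X) :
    ∃ g : G, #A * #B ≤ #{x ∈ A | g • x ∈ B} * #X := by
  obtain ⟨g, -, hg⟩ := exists_le_of_sum_le (univ_nonempty (α := G)) (f := fun _ => #A * #B)
    (g := fun g => #{x ∈ A | g • x ∈ B} * #X) <| le_of_eq <| calc
      ∑ _g : G, #A * #B = ∑ x ∈ A, #{g : G | g • x ∈ B} * #X := by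
        rw [sum_const, card_univ, smul_eq_mul,
          sum_congr rfl fun x hx => card_filter_smul_mem_mul_card hinv htrans (hA hx) hB,
          sum_const, smul_eq_mul]
        ring
      _ = ∑ g : G, #{x ∈ A | g • x ∈ B} * #X := by
        rw [← sum_mul, ← sum_mul]
        exact congrArg (· * #X)
          (sum_card_bipartiteAbove_eq_sum_card_bipartiteBelow (fun g x => g • x ∈ B)).symm
  exact ⟨g, hg⟩

end DoubleCounting

section GreedyCover

variable {ι β : Type*} [DecidableEq ι] (P : ι → β → Prop) [∀ i, DecidablePred (P i)]
  {X : Finset β} {p : ℝ}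

theorem exists_card_le_and_card_uncovered_le_mul_pow (hp : p ≤ 1)
    (hgood : ∀ T ⊆ X, ∃ i, p * #T ≤ #{x ∈ T | P i x}) (k : ℕ) :
    ∃ H : Finset ι, #H ≤ k ∧ (#{x ∈ X | ∀ i ∈ H, ¬ P i x} : ℝ) ≤ #X * (1 - p) ^ k := by
  induction k with
  | zero => exact ⟨∅, by simp, by simp⟩
  | succ k ih =>
    obtain ⟨H, hHk, hH⟩ := ih
    set U := {x ∈ X | ∀ i ∈ H, ¬ P i x}
    obtain ⟨i, hi⟩ := hgood U (filter_subset _ _)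
    have hsplit : #{x ∈ U | P i x} + #{x ∈ U | ¬ P i x} = #U :=
      card_filter_add_card_filter_not _
    have huncovered : {x ∈ X | ∀ j ∈ insert i H, ¬ P j x} = {x ∈ U | ¬ P i x} := by
      ext x
      simp only [U, mem_filter, forall_mem_insert]
      tauto
    refine ⟨insert i H, (card_insert_le i H).trans (Nat.succ_le_succ hHk), ?_⟩
    rw [huncovered]
    calc (#{x ∈ U | ¬ P i x} : ℝ) = #U - #{x ∈ U | P i x} := by
          rw [← hsplit]; push_cast; ring
      _ ≤ (1 - p) * #U := by linarith
      _ ≤ (1 - p) * (#X * (1 - p) ^ k) := by gcongr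
      _ = #X * (1 - p) ^ (k + 1) := by ring

theorem exists_cover_card_le (hp : p ≤ 1) (hgood : ∀ T ⊆ X, ∃ i, p * #T ≤ #{x ∈ T | P i x})
    {N : ℕ} (hN : #X * (1 - p) ^ N < 1) :
    ∃ H : Finset ι, #H ≤ N ∧ ∀ x ∈ X, ∃ i ∈ H, P i x := by
  obtain ⟨H, hHN, hH⟩ := exists_card_le_and_card_uncovered_le_mul_pow P hp hgood N
  have hempty : {x ∈ X | ∀ i ∈ H, ¬ P i x} = ∅ :=
    card_eq_zero.1 <| Nat.lt_one_iff.1 <| by exact_mod_cast hH.trans_lt hN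
  refine ⟨H, hHN, fun x hx => ?_⟩
  by_contra! hx'
  have hmem : x ∈ ({x ∈ X | ∀ i ∈ H, ¬ P i x} : Finset β) := mem_filter.2 ⟨hx, hx'⟩
  simp [hempty] at hmem

end GreedyCover

theorem Real.mul_pow_lt_one_of_log_div_neg_log_lt {a q : ℝ} {N : ℕ} (ha : 0 < a) (hq0 : 0 < q)
    (hq1 : q < 1) (hN : Real.log a / -Real.log q < N) : a * q ^ N < 1 := by
  have hlogq : 0 < -Real.log q := neg_pos.2 (Real.log_neg hq0 hq1)
  rw [div_lt_iff₀ hlogq] at hN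
  rw [← Real.log_neg_iff (by positivity), Real.log_mul ha.ne' (by positivity), Real.log_pow]
  linarith

open scoped Pointwise in
theorem Equiv.Perm.exists_smul_finset_eq {α : Type*} [DecidableEq α] {s t : Finset α}
    (h : #s = #t) : ∃ σ : Perm α, σ • s = t := by
  have := Set.powersetCard.isPretransitive (α := α) (n := #t)
  obtain ⟨σ, hσ⟩ := MulAction.exists_smul_eq (Perm α) (Set.powersetCard.ofCard h)
    (Set.powersetCard.ofCard rfl)
  exact ⟨σ, by simpa using congrArg Subtype.val hσ⟩

section Hashing

open scoped Pointwise

variable {u m n d : ℕ}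

lemma cost_comp_perm (h : Fin u → Fin m) (σ : Equiv.Perm (Fin u)) (S : Finset (Fin u)) :
    cost (h ∘ σ) S = cost h (σ • S) := by
  simp only [cost, smul_finset_def, Equiv.Perm.smul_def, filter_image,
    card_image_of_injective _ σ.injective, Function.comp_apply]

lemma exists_hash_card_mul_card_le (h₀ : Fin u → Fin m) {T : Finset (Finset (Fin u))}
    (hT : T ⊆ Sn u n) :
    ∃ g : Fin u → Fin m,
      #T * #{S ∈ Sn u n | cost h₀ S ≤ d} ≤ #{S ∈ T | cost g S ≤ d} * u.choose n := by
  have hSn : ∀ {S : Finset (Fin u)}, S ∈ Sn u n ↔ #S = n := mem_powersetCard_univ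
  obtain ⟨σ, hσ⟩ := exists_card_mul_card_le_card_filter_smul_mem_mul_card (X := Sn u n)
    (fun σ S hS => hSn.2 <| (card_smul_finset σ S).trans (hSn.1 hS))
    (fun S hS T hT => Equiv.Perm.exists_smul_finset_eq ((hSn.1 hS).trans (hSn.1 hT).symm))
    hT (filter_subset (fun S => cost h₀ S ≤ d) (Sn u n))
  refine ⟨h₀ ∘ σ, ?_⟩
  have hfilter :
      {S ∈ T | σ • S ∈ {S ∈ Sn u n | cost h₀ S ≤ d}} = {S ∈ T | cost (h₀ ∘ σ) S ≤ d} := by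
    refine filter_congr fun S hS => ?_
    rw [mem_filter, cost_comp_perm, and_iff_right_iff_imp]
    exact fun _ => hSn.2 <| (card_smul_finset σ S).trans (hSn.1 (hT hS))
  rwa [hfilter, Sn, card_powersetCard, card_univ, Fintype.card_fin, ← Sn] at hσ

lemma exists_hash_card_filter_cost_le_eq_Mc (hMc : 0 < Mc u m n d) :
    ∃ h₀ : Fin u → Fin m, #{S ∈ Sn u n | cost h₀ S ≤ d} = Mc u m n d := by
  obtain ⟨h, -, -⟩ := Finset.lt_sup_iff.1 hMc
  obtain ⟨h₀, -, hh₀⟩ := exists_mem_eq_sup univ ⟨h, mem_univ h⟩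
    fun h : Fin u → Fin m => #{S ∈ Sn u n | cost h S ≤ d}
  exact ⟨h₀, hh₀.symm⟩

lemma exists_hash_Mc_div_choose_mul_card_le (hMc : 0 < Mc u m n d)
    {T : Finset (Finset (Fin u))} (hT : T ⊆ Sn u n) :
    ∃ g : Fin u → Fin m, (Mc u m n d / u.choose n : ℝ) * #T ≤ #{S ∈ T | cost g S ≤ d} := by
  obtain ⟨h₀, hh₀⟩ := exists_hash_card_filter_cost_le_eq_Mc hMc
  obtain ⟨g, hg⟩ := exists_hash_card_mul_card_le h₀ hT (d := d)
  refine ⟨g, ?_⟩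
  rw [div_mul_eq_mul_div]
  refine div_le_of_le_mul₀ (by positivity) (by positivity) ?_
  rw [← hh₀, mul_comm]
  exact_mod_cast hg

end Hashing

theorem probabilistic_existence_small_family_general (u m n d : ℕ)
    (hp0 : 0 < (Mc u m n d : ℝ) / (Nat.choose u n : ℝ))
    (hp1 : (Mc u m n d : ℝ) / (Nat.choose u n : ℝ) < 1)
    (N : ℕ)
    (hN : Real.log (Nat.choose u n : ℝ) /
        (-Real.log (1 - (Mc u m n d : ℝ) / (Nat.choose u n : ℝ))) < (N : ℝ)) :
    ∃ H : Finset (Fin u → Fin m), IsIdealFamily u m n d H ∧ H.card ≤ N := by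
  obtain ⟨hMc, hchoose⟩ : (0 : ℝ) < Mc u m n d ∧ (0 : ℝ) < u.choose n :=
    (div_pos_iff.1 hp0).resolve_right fun h => (Nat.cast_nonneg _).not_gt h.1
  have hcard : #(Sn u n) * (1 - Mc u m n d / u.choose n : ℝ) ^ N < 1 := by
    rw [Sn, card_powersetCard, card_univ, Fintype.card_fin]
    exact Real.mul_pow_lt_one_of_log_div_neg_log_lt hchoose (by linarith) (by linarith) hN
  obtain ⟨H, hHN, hH⟩ := exists_cover_card_le (fun h S => cost h S ≤ d) hp1.le
    (fun T hT => exists_hash_Mc_div_choose_mul_card_le (by exact_mod_cast hMc) hT) hcard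
  exact ⟨H, hH, hHN⟩

/-- **Probabilistic existence of small `c`-ideal families** (key step in the proof of
Lemma 3.4): with `p := M_c / C(u,n)` and `0 < p < 1`, every natural number
`N > ln C(u,n) / (−ln(1−p))` admits a `c`-ideal family of cardinality at most `N`. -/
theorem probabilistic_existence_small_family (u m n d : ℕ) (hu : 0 < u) (hm : 0 < m)
    (hn : 0 < n) (hmn : m ≤ n) (hnu : n ^ 2 ≤ u) (hdvd : m ∣ n) (hαd : n / m ≤ d)
    (hp0 : 0 < (Mc u m n d : ℝ) / (Nat.choose u n : ℝ))
    (hp1 : (Mc u m n d : ℝ) / (Nat.choose u n : ℝ) < 1)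
    (N : ℕ)
    (hN : Real.log (Nat.choose u n : ℝ) /
        (-Real.log (1 - (Mc u m n d : ℝ) / (Nat.choose u n : ℝ))) < (N : ℝ)) :
    ∃ H : Finset (Fin u → Fin m), IsIdealFamily u m n d H ∧ H.card ≤ N :=
  probabilistic_existence_small_family_general u m n d hp0 hp1 N hN
end
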